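/- arXiv:1505.06898 — 7 statements merged into one kernel-verified Lean document; each statement's English description precedes it below -/
import Mathlib

section
/- Let G be a finite acyclic digraph with distinguished set X, let χ be a character on X, and let G' be obtained from G by contracting a vertex v ∉ X with in-degree one and out-degree one (i.e., replacing the two edges (u,v),(v,w) by the single edge (u,w) and removing v). Then the hardwired parsimony score of χ on G' equals the hardwired parsimony score of χ on G, in particular it does not increase. -/
/-!
Write `[a ≠ b]` for the indicator of `a ≠ b`. Outside the edges `(u, v)`, `(v, w)`, `(u, w)`
the two digraphs have the same edges, so everything hinges on
`[f u ≠ f w] ≤ [f u ≠ f v] + [f v ≠ f w]`: any extension costs no more on the contracted digraph.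
Conversely, an extension for the contracted digraph becomes one for `G` at the same cost once `v`,
which is not in `X` and lies on no other edge, receives the state of `w`.
-/

open scoped Classical

structure Digraph' (V : Type) where
  edges : Finset (V × V)

namespace Digraph'

variable {V W X C : Type}

noncomputable def indeg (G : Digraph' V) (v : V) : ℕ :=
  (G.edges.filter fun e => e.2 = v).card

noncomputable def outdeg (G : Digraph' V) (v : V) : ℕ :=
  (G.edges.filter fun e => e.1 = v).card

def Acyclic (G : Digraph' V) : Prop :=
  ∀ v : V, ¬ Relation.TransGen (fun a b => (a, b) ∈ G.edges) v v

/-- changing number: edges whose endpoints get different states -/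
noncomputable def ch (G : Digraph' V) (f : V → C) : ℕ :=
  (G.edges.filter fun e => f e.1 ≠ f e.2).card

/-- `f` extends the character `χ` on the (distinguished) leaves -/
def Extends (leaf : X → V) (χ : X → C) (f : V → C) : Prop :=
  ∀ x, f (leaf x) = χ x

/-- hardwired parsimony score -/
noncomputable def psHard (G : Digraph' V) (leaf : X → V) (χ : X → C) : ℕ :=
  sInf {n | ∃ f : V → C, Extends leaf χ f ∧ ch G f = n}

structure IsPhyloNetwork (G : Digraph' V) (root : V) (leaf : X → V) : Prop where
  acyclic : G.Acyclic
  leaf_inj : Function.Injective leaf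
  reach : ∀ v : V, Relation.ReflTransGen (fun a b => (a, b) ∈ G.edges) root v
  leaf_iff : ∀ v : V, (∃ x, leaf x = v) ↔ G.indeg v = 1 ∧ G.outdeg v = 0
  root_out : 2 ≤ G.outdeg root
  root_in : G.indeg root = 0
  internal : ∀ v : V, v ≠ root → ¬(∃ x, leaf x = v) →
      (G.indeg v = 1 ∧ 2 ≤ G.outdeg v) ∨ (2 ≤ G.indeg v ∧ G.outdeg v = 1)

def IsPhyloTree (G : Digraph' V) (root : V) (leaf : X → V) : Prop :=
  IsPhyloNetwork G root leaf ∧ ∀ v : V, G.indeg v ≤ 1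

def IsBinaryPhyloTree (G : Digraph' V) (root : V) (leaf : X → V) : Prop :=
  IsPhyloTree G root leaf ∧ G.outdeg root = 2 ∧
    ∀ v : V, v ≠ root → ¬(∃ x, leaf x = v) → G.outdeg v = 2

def internalVerts (l : List V) : List V := (l.drop 1).dropLast

def pathEdges (l : List V) : List (V × V) := l.zip l.tail

/-- `T` is displayed by `N`: an embedding of a subdivision of `T` into `N`,
    mapping leaves to leaves, tree edges to directed paths that are internally
    disjoint from each other and from the images of tree vertices. -/
def Displays (N : Digraph' V) (leafN : X → V) (T : Digraph' W) (leafT : X → W) : Prop :=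
  ∃ φ : W → V, Function.Injective φ ∧ (∀ x, φ (leafT x) = leafN x) ∧
    ∃ P : W → W → List V, ∀ e ∈ T.edges,
      (P e.1 e.2).Chain' (fun a b => (a, b) ∈ N.edges) ∧
      (P e.1 e.2).head? = some (φ e.1) ∧
      (P e.1 e.2).getLast? = some (φ e.2) ∧
      2 ≤ (P e.1 e.2).length ∧
      (P e.1 e.2).Nodup ∧
      (∀ w ∈ internalVerts (P e.1 e.2), w ∉ Set.range φ) ∧
      ∀ e' ∈ T.edges, e ≠ e' →
        (∀ w ∈ internalVerts (P e.1 e.2), w ∉ internalVerts (P e'.1 e'.2)) ∧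
        ∀ p ∈ pathEdges (P e.1 e.2), p ∉ pathEdges (P e'.1 e'.2)

/-- softwired parsimony score of a single character -/
noncomputable def psSoft (N : Digraph' V) (leafN : X → V) (χ : X → C) : ℕ :=
  sInf {n | ∃ (W : Type) (T : Digraph' W) (rootT : W) (leafT : X → W),
    IsPhyloTree T rootT leafT ∧ Displays N leafN T leafT ∧ psHard T leafT χ = n}

noncomputable def psHardSeq (G : Digraph' V) (leaf : X → V) {k : ℕ} (S : Fin k → X → C) : ℕ :=
  ∑ i, psHard G leaf (S i)

noncomputable def psSoftSeq (N : Digraph' V) (leafN : X → V) {k : ℕ} (S : Fin k → X → C) : ℕ :=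
  ∑ i, psSoft N leafN (S i)

/-- a switching keeps all edges into non-reticulations and exactly one
    in-edge per reticulation -/
def IsSwitching (N T : Digraph' V) : Prop :=
  T.edges ⊆ N.edges ∧ (∀ e ∈ N.edges, N.indeg e.2 ≤ 1 → e ∈ T.edges) ∧
    ∀ v : V, 2 ≤ N.indeg v → T.indeg v = 1

/-- number of negligible edges under `f` -/
noncomputable def negl (N : Digraph' V) (f : V → C) : ℕ :=
  (N.edges.filter fun e =>
    2 ≤ N.indeg e.2 ∧ f e.1 ≠ f e.2 ∧ ∃ p, (p, e.2) ∈ N.edges ∧ f p = f e.2).card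

/-- isomorphism of leaf-labelled digraphs -/
def Iso {W' : Type} (T : Digraph' W) (leafT : X → W) (T' : Digraph' W') (leafT' : X → W') : Prop :=
  ∃ g : W ≃ W', (∀ u v : W, (u, v) ∈ T.edges ↔ (g u, g v) ∈ T'.edges) ∧
    ∀ x, g (leafT x) = leafT' x

end Digraph'

open Digraph'

namespace Digraph'

variable {V X C : Type}

section ChangingNumber

lemma ch_insert {E : Finset (V × V)} {e : V × V} (he : e ∉ E) (f : V → C) :
    ch ⟨insert e E⟩ f = ch ⟨E⟩ f + if f e.1 ≠ f e.2 then 1 else 0 := by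
  unfold ch
  rw [Finset.filter_insert]
  split_ifs
  · exact Finset.card_insert_of_notMem fun h => he (Finset.mem_filter.1 h).1
  · rfl

lemma ch_eq_ch_erase_add {G : Digraph' V} {e : V × V} (he : e ∈ G.edges) (f : V → C) :
    ch G f = ch ⟨G.edges.erase e⟩ f + if f e.1 ≠ f e.2 then 1 else 0 := by
  rw [← ch_insert (Finset.notMem_erase e G.edges), Finset.insert_erase he]

lemma ch_update_of_forall_ne (G : Digraph' V) (f : V → C) {v : V} (c : C)
    (hv : ∀ e ∈ G.edges, e.1 ≠ v ∧ e.2 ≠ v) : ch G (Function.update f v c) = ch G f := by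
  unfold ch
  congr 1
  refine Finset.filter_congr fun e he => ?_
  rw [Function.update_of_ne (hv e he).1, Function.update_of_ne (hv e he).2]

end ChangingNumber

section HardwiredScore

variable {leaf : X → V} {χ : X → C}

lemma Extends.update {f : V → C} (hf : Extends leaf χ f) {v : V} (hv : ¬ ∃ x, leaf x = v)
    (c : C) : Extends leaf χ (Function.update f v c) := fun x => by
  rw [Function.update_of_ne fun h => hv ⟨x, h⟩]
  exact hf x

lemma psHard_le_ch (G : Digraph' V) {f : V → C} (hf : Extends leaf χ f) :
    psHard G leaf χ ≤ ch G f :=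
  Nat.sInf_le ⟨f, hf, rfl⟩

lemma exists_ch_eq_psHard (G : Digraph' V) {f : V → C} (hf : Extends leaf χ f) :
    ∃ g, Extends leaf χ g ∧ ch G g = psHard G leaf χ :=
  Nat.sInf_mem (s := {n | ∃ g, Extends leaf χ g ∧ ch G g = n}) ⟨_, f, hf, rfl⟩

lemma psHard_eq_zero_of_forall_not_extends (G : Digraph' V)
    (hχ : ∀ f : V → C, ¬ Extends leaf χ f) : psHard G leaf χ = 0 :=
  Nat.sInf_eq_zero.2 <| Or.inr <| Set.eq_empty_of_forall_notMem fun _ ⟨f, hf, _⟩ => hχ f hf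

lemma psHard_le_of_forall_exists_ch_le {G H : Digraph' V}
    (h : ∀ f, Extends leaf χ f → ∃ g, Extends leaf χ g ∧ ch H g ≤ ch G f) :
    psHard H leaf χ ≤ psHard G leaf χ := by
  by_cases hχ : ∃ f : V → C, Extends leaf χ f
  · obtain ⟨f₀, hf₀⟩ := hχ
    obtain ⟨f, hf, hfG⟩ := exists_ch_eq_psHard G hf₀
    obtain ⟨g, hg, hgf⟩ := h f hf
    exact (psHard_le_ch H hg).trans (hfG ▸ hgf)
  · simp [psHard_eq_zero_of_forall_not_extends H (not_exists.1 hχ)]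

end HardwiredScore

section Contraction

noncomputable def contract (G : Digraph' V) (u v w : V) : Digraph' V :=
  ⟨insert (u, w) ((G.edges.erase (u, v)).erase (v, w))⟩

structure IsContractible (G : Digraph' V) (u v w : V) : Prop where
  in_edge : (u, v) ∈ G.edges
  out_edge : (v, w) ∈ G.edges
  indeg_eq_one : G.indeg v = 1
  outdeg_eq_one : G.outdeg v = 1
  shortcut_notMem : (u, w) ∉ G.edges

namespace IsContractible

variable {G : Digraph' V} {u v w : V}

lemma fst_eq_of_mem (h : IsContractible G u v w) {a : V} (ha : (a, v) ∈ G.edges) : a = u :=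
  congrArg Prod.fst <| Finset.card_le_one.1 h.indeg_eq_one.le _
    (Finset.mem_filter.2 ⟨ha, rfl⟩) _ (Finset.mem_filter.2 ⟨h.in_edge, rfl⟩)

lemma snd_eq_of_mem (h : IsContractible G u v w) {b : V} (hb : (v, b) ∈ G.edges) : b = w :=
  congrArg Prod.snd <| Finset.card_le_one.1 h.outdeg_eq_one.le _
    (Finset.mem_filter.2 ⟨hb, rfl⟩) _ (Finset.mem_filter.2 ⟨h.out_edge, rfl⟩)

-- A loop at `v` would be both its in-edge and its out-edge, forcing `u = v = w`.
lemma fst_ne (h : IsContractible G u v w) : u ≠ v := by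
  rintro rfl
  obtain rfl := h.snd_eq_of_mem h.in_edge
  exact h.shortcut_notMem h.in_edge

lemma ne_snd (h : IsContractible G u v w) : v ≠ w := by
  rintro rfl
  obtain rfl := h.fst_eq_of_mem h.out_edge
  exact h.shortcut_notMem h.out_edge

lemma forall_ne_of_mem_erase (h : IsContractible G u v w) :
    ∀ e ∈ (G.edges.erase (u, v)).erase (v, w), e.1 ≠ v ∧ e.2 ≠ v := by
  rintro ⟨a, b⟩ he
  obtain ⟨hvw, huv, hab⟩ : (a, b) ≠ (v, w) ∧ (a, b) ≠ (u, v) ∧ (a, b) ∈ G.edges := by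
    simpa using he
  refine ⟨fun ha => hvw ?_, fun hb => huv ?_⟩
  · subst ha
    rw [h.snd_eq_of_mem hab]
  · subst hb
    rw [h.fst_eq_of_mem hab]

lemma ch_eq (h : IsContractible G u v w) (f : V → C) :
    ch G f = ch ⟨(G.edges.erase (u, v)).erase (v, w)⟩ f
      + (if f v ≠ f w then 1 else 0) + (if f u ≠ f v then 1 else 0) := by
  have hvw : (v, w) ∈ G.edges.erase (u, v) :=
    Finset.mem_erase.2 ⟨fun he => h.fst_ne (congrArg Prod.fst he).symm, h.out_edge⟩
  rw [ch_eq_ch_erase_add h.in_edge, ch_eq_ch_erase_add (G := ⟨G.edges.erase (u, v)⟩) hvw]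

lemma ch_contract_eq (h : IsContractible G u v w) (f : V → C) :
    ch (G.contract u v w) f = ch ⟨(G.edges.erase (u, v)).erase (v, w)⟩ f
      + if f u ≠ f w then 1 else 0 :=
  ch_insert (fun he => h.shortcut_notMem (Finset.mem_of_mem_erase (Finset.mem_of_mem_erase he))) f

lemma ch_contract_le (h : IsContractible G u v w) (f : V → C) :
    ch (G.contract u v w) f ≤ ch G f := by
  have htriangle : (if f u ≠ f w then 1 else 0) ≤
      (if f v ≠ f w then 1 else 0) + (if f u ≠ f v then 1 else 0) := by
    split_ifs <;> simp_all
  rw [h.ch_contract_eq, h.ch_eq]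
  omega

lemma ch_update_eq (h : IsContractible G u v w) (f : V → C) :
    ch G (Function.update f v (f w)) = ch (G.contract u v w) f := by
  rw [h.ch_eq, h.ch_contract_eq,
    ch_update_of_forall_ne ⟨(G.edges.erase (u, v)).erase (v, w)⟩ _ _ h.forall_ne_of_mem_erase,
    Function.update_self, Function.update_of_ne h.fst_ne, Function.update_of_ne h.ne_snd.symm]
  simp

lemma psHard_contract (h : IsContractible G u v w) {leaf : X → V} (χ : X → C)
    (hv : ¬ ∃ x, leaf x = v) : psHard (G.contract u v w) leaf χ = psHard G leaf χ :=
  le_antisymm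
    (psHard_le_of_forall_exists_ch_le fun f hf => ⟨f, hf, h.ch_contract_le f⟩)
    (psHard_le_of_forall_exists_ch_le fun f hf =>
      ⟨Function.update f v (f w), hf.update hv _, (h.ch_update_eq f).le⟩)

end IsContractible

end Contraction

end Digraph'

theorem stmt1_general {V X C : Type} (G : Digraph' V) (leaf : X → V) (χ : X → C)
    (u v w : V) (huv : (u, v) ∈ G.edges) (hvw : (v, w) ∈ G.edges)
    (hin : G.indeg v = 1) (hout : G.outdeg v = 1)
    (hnotleaf : ¬ ∃ x, leaf x = v) (hnew : (u, w) ∉ G.edges) :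
    psHard (Digraph'.mk (insert (u, w) ((G.edges.erase (u, v)).erase (v, w)))) leaf χ
      = psHard G leaf χ :=
  IsContractible.psHard_contract ⟨huv, hvw, hin, hout, hnew⟩ χ hnotleaf

/-- contracting an in-degree-one out-degree-one non-leaf vertex
    leaves the hardwired parsimony score unchanged. -/
theorem stmt1 {V X C : Type} (G : Digraph' V) (leaf : X → V) (χ : X → C)
    (hacyc : G.Acyclic) (hleaf_out : ∀ x, G.outdeg (leaf x) = 0)
    (u v w : V) (huv : (u, v) ∈ G.edges) (hvw : (v, w) ∈ G.edges)
    (hin : G.indeg v = 1) (hout : G.outdeg v = 1)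
    (hnotleaf : ¬ ∃ x, leaf x = v) (hnew : (u, w) ∉ G.edges) :
    psHard (Digraph'.mk (insert (u, w) ((G.edges.erase (u, v)).erase (v, w)))) leaf χ
      = psHard G leaf χ :=
  stmt1_general G leaf χ u v w huv hvw hin hout hnotleaf hnew
end

section
/- Let N be a rooted phylogenetic network on X, let T be a rooted phylogenetic tree on X displayed by N, let χ be a character on X, and let χ̄ be any extension of χ to V(N). Then there exists an extension χ̄₁ of χ to V(T) such that ch(χ̄,N) ≥ ch(χ̄₁,T). -/
open scoped Classical

open Digraph'

/-! Give each tree vertex the state of its image in `N`. A tree edge whose ends get different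
states is realised by a path of `N` whose ends differ, so some edge of that path changes state;
since the paths are edge-disjoint, distinct changing edges of `T` receive distinct changing edges
of `N`. -/

theorem List.IsChain.exists_mem_zip_tail_rel_ne {α β : Type*} {R : α → α → Prop} (f : α → β) :
    ∀ {l : List α} {a b : α}, l.IsChain R → l.head? = some a → l.getLast? = some b →
      f a ≠ f b → ∃ p ∈ l.zip l.tail, R p.1 p.2 ∧ f p.1 ≠ f p.2
  | [], _, _, _, ha, _, _ => by simp at ha
  | [_], _, _, _, ha, hb, hne => by simp_all
  | x :: y :: l, a, b, hc, ha, hb, hne => by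
    rw [List.isChain_cons_cons] at hc
    obtain rfl : x = a := by simpa using ha
    by_cases hxy : f x = f y
    · obtain ⟨p, hp, hRp, hfp⟩ :=
        hc.2.exists_mem_zip_tail_rel_ne f rfl (by simpa using hb) (hxy ▸ hne)
      exact ⟨p, List.mem_cons_of_mem _ hp, hRp, hfp⟩
    · exact ⟨(x, y), by simp, hc.1, hxy⟩

namespace Digraph'

variable {V W C : Type}

theorem ch_comp_le_ch (N : Digraph' V) (T : Digraph' W) (f : V → C) (φ : W → V)
    (P : W → W → List V)
    (hpath : ∀ e ∈ T.edges, (P e.1 e.2).IsChain (fun a b => (a, b) ∈ N.edges) ∧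
      (P e.1 e.2).head? = some (φ e.1) ∧ (P e.1 e.2).getLast? = some (φ e.2))
    (hdisj : ∀ e ∈ T.edges, ∀ e' ∈ T.edges, e ≠ e' →
      ∀ p ∈ pathEdges (P e.1 e.2), p ∉ pathEdges (P e'.1 e'.2)) :
    ch T (f ∘ φ) ≤ ch N f := by
  refine Finset.card_le_card_of_forall_subsingleton (fun e p => p ∈ pathEdges (P e.1 e.2))
    (fun e he => ?_) (fun p _ e he e' he' => ?_)
  · rw [Finset.mem_filter] at he
    obtain ⟨hc, ha, hb⟩ := hpath e he.1
    obtain ⟨p, hp, hpN, hfp⟩ := hc.exists_mem_zip_tail_rel_ne f ha hb he.2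
    exact ⟨p, Finset.mem_filter.2 ⟨hpN, hfp⟩, hp⟩
  · by_contra hne
    exact hdisj e (Finset.mem_filter.1 he.1).1 e' (Finset.mem_filter.1 he'.1).1 hne p he.2 he'.2

end Digraph'

theorem stmt2_general {V W X C : Type} (N : Digraph' V) (leafN : X → V)
    (T : Digraph' W) (leafT : X → W)
    (hD : Displays N leafN T leafT)
    (χ : X → C) (f : V → C) (hf : Extends leafN χ f) :
    ∃ g : W → C, Extends leafT χ g ∧ ch T g ≤ ch N f := by
  obtain ⟨φ, -, hφleaf, P, hP⟩ := hD
  refine ⟨f ∘ φ, fun x => by simp only [Function.comp_apply, hφleaf, hf x],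
    ch_comp_le_ch N T f φ P (fun e he => ?_) fun e he e' he' hne => ?_⟩
  · obtain ⟨hchain, hhead, hlast, -⟩ := hP e he
    exact ⟨hchain, hhead, hlast⟩
  · obtain ⟨-, -, -, -, -, -, hdisj⟩ := hP e he
    exact (hdisj e' he' hne).2

/-- any extension of χ to a network N induces an extension to a
    displayed tree T with changing number at most that on N. -/
theorem stmt2 {V W X C : Type} (N : Digraph' V) (rootN : V) (leafN : X → V)
    (T : Digraph' W) (rootT : W) (leafT : X → W)
    (hN : IsPhyloNetwork N rootN leafN) (hT : IsPhyloTree T rootT leafT)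
    (hD : Displays N leafN T leafT)
    (χ : X → C) (f : V → C) (hf : Extends leafN χ f) :
    ∃ g : W → C, Extends leafT χ g ∧ ch T g ≤ ch N f :=
  stmt2_general N leafN T leafT hD χ f hf
end

section
/- For every finite sequence S of characters on a finite set X, there exists a rooted phylogenetic tree T on X such that PS_hard(S,T) ≤ PS_hard(S,N) for every rooted phylogenetic network N on X; that is, a hardwired maximum parsimony network for S can always be chosen to be a tree. -/
open scoped Classical

open Digraph'

/-!
Pick one in-edge for every vertex of a network `N` other than the root. These edges form a spanning
tree of `N`, and its clusters form a hierarchy on `X`, whose Hasse diagram is a phylogenetic tree.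
Given an extension `f` of a character to `N`, label each cluster `B` by the value of `f` at the
lowest vertex with cluster `B`. A tree edge `A → B` that changes state then yields a spanning-tree
edge of `N` that changes state and whose head has cluster `B`; since `B` determines the tree edge,
this is an injection, so the tree scores at most as much as `N` on every character. A tree of
minimal total score, which exists because the star tree does, is therefore optimal among networks.
-/

namespace Digraph'

open Relation

theorem wellFounded_of_forall_not_transGen {α : Type*} [Finite α] {R : α → α → Prop}
    (h : ∀ a, ¬ TransGen R a a) : WellFounded R :=
  haveI : IsTrans α (TransGen R) := ⟨fun _ _ _ => TransGen.trans⟩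
  haveI : Std.Irrefl (TransGen R) := ⟨h⟩
  Subrelation.wf TransGen.single (Finite.wellFounded_of_trans_of_irrefl _)

section Degrees

variable {V : Type} {G : Digraph' V}

theorem indeg_eq_zero_iff {v : V} : G.indeg v = 0 ↔ ∀ u, (u, v) ∉ G.edges := by
  rw [indeg, Finset.card_eq_zero, Finset.filter_eq_empty_iff]
  exact ⟨fun h u hu => h hu rfl, fun h ⟨u, w⟩ he hw => h u (hw ▸ he)⟩

theorem outdeg_eq_zero_iff {v : V} : G.outdeg v = 0 ↔ ∀ w, (v, w) ∉ G.edges := by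
  rw [outdeg, Finset.card_eq_zero, Finset.filter_eq_empty_iff]
  exact ⟨fun h w hw => h hw rfl, fun h ⟨u, w⟩ he hu => h w (hu ▸ he)⟩

theorem indeg_eq_one_iff {v : V} :
    G.indeg v = 1 ↔ ∃ u, (u, v) ∈ G.edges ∧ ∀ u', (u', v) ∈ G.edges → u' = u := by
  rw [indeg, Finset.card_eq_one]
  constructor
  · rintro ⟨⟨u, w⟩, h⟩
    have hmem : ∀ e, e ∈ G.edges ∧ e.2 = v ↔ e = (u, w) := fun e => by
      simpa using Finset.ext_iff.1 h e
    obtain ⟨huw, rfl⟩ := (hmem (u, w)).2 rfl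
    exact ⟨u, huw, fun u' hu' => congrArg Prod.fst ((hmem (u', w)).1 ⟨hu', rfl⟩)⟩
  · rintro ⟨u, hu, huniq⟩
    refine ⟨(u, v), Finset.ext fun ⟨u', w⟩ => ?_⟩
    simp only [Finset.mem_filter, Finset.mem_singleton, Prod.mk.injEq]
    constructor
    · rintro ⟨h, rfl⟩
      exact ⟨huniq u' h, rfl⟩
    · rintro ⟨rfl, rfl⟩
      exact ⟨hu, rfl⟩

theorem two_le_outdeg {v w w' : V} (h : (v, w) ∈ G.edges) (h' : (v, w') ∈ G.edges)
    (hne : w ≠ w') : 2 ≤ G.outdeg v :=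
  Finset.one_lt_card_iff.2 ⟨_, _, Finset.mem_filter.2 ⟨h, rfl⟩,
    Finset.mem_filter.2 ⟨h', rfl⟩, fun h => hne (congrArg Prod.snd h)⟩

end Degrees

section Parsimony

variable {V W X C : Type}

theorem exists_extends [Nonempty C] {leaf : X → V} (hleaf : Function.Injective leaf)
    (χ : X → C) : ∃ f, Extends leaf χ f :=
  ⟨Function.extend leaf χ fun _ => Classical.arbitrary C, hleaf.extend_apply χ _⟩

theorem psHard_le_of_forall_extends {G : Digraph' W} {H : Digraph' V} {leafG : X → W}
    {leafH : X → V} {χ : X → C} (hH : ∃ f, Extends leafH χ f)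
    (h : ∀ f, Extends leafH χ f → ∃ g, Extends leafG χ g ∧ ch G g ≤ ch H f) :
    psHard G leafG χ ≤ psHard H leafH χ := by
  obtain ⟨f₀, hf₀⟩ := hH
  obtain ⟨f, hf, hfH⟩ := Nat.sInf_mem (s := {n | ∃ f, Extends leafH χ f ∧ ch H f = n})
    ⟨_, f₀, hf₀, rfl⟩
  obtain ⟨g, hg, hgf⟩ := h f hf
  calc psHard G leafG χ ≤ ch G g := Nat.sInf_le ⟨g, hg, rfl⟩
    _ ≤ ch H f := hgf
    _ = psHard H leafH χ := hfH

end Parsimony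

section Hierarchy

variable {X : Type} [Fintype X]

structure IsHierarchy (P : Finset X → Prop) : Prop where
  univ_mem : P Finset.univ
  singleton_mem : ∀ x, P {x}
  nonempty : ∀ A, P A → A.Nonempty
  laminar : ∀ A B, P A → P B → ∀ x ∈ A, x ∈ B → A ⊆ B ∨ B ⊆ A

noncomputable def hasseDiagram (P : Finset X → Prop) : Digraph' {A // P A} :=
  ⟨Finset.univ.filter fun e => e.2 ⋖ e.1⟩

variable {P : Finset X → Prop}

theorem mem_hasseDiagram {A B : {A // P A}} : (A, B) ∈ (hasseDiagram P).edges ↔ B ⋖ A := by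
  simp [hasseDiagram]

theorem lt_of_transGen_hasseDiagram {A B : {A // P A}}
    (h : TransGen (fun a b => (a, b) ∈ (hasseDiagram P).edges) A B) : B < A := by
  induction h with
  | single h => exact (mem_hasseDiagram.1 h).lt
  | tail _ h ih => exact (mem_hasseDiagram.1 h).lt.trans ih

theorem isHierarchy_star [Nonempty X] :
    IsHierarchy fun A : Finset X => A = Finset.univ ∨ ∃ x, A = {x} where
  univ_mem := .inl rfl
  singleton_mem x := .inr ⟨x, rfl⟩
  nonempty := by
    rintro A (rfl | ⟨x, rfl⟩)
    exacts [Finset.univ_nonempty, Finset.singleton_nonempty x]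
  laminar := by
    rintro A B (rfl | ⟨a, rfl⟩) (rfl | ⟨b, rfl⟩) x hA hB
    · exact .inl le_rfl
    · exact .inr (Finset.subset_univ _)
    · exact .inl (Finset.subset_univ _)
    · rw [Finset.mem_singleton] at hA hB
      subst hA hB
      exact .inl le_rfl

namespace IsHierarchy

variable (hP : IsHierarchy P)

def top : {A // P A} := ⟨Finset.univ, hP.univ_mem⟩

def leaf (x : X) : {A // P A} := ⟨{x}, hP.singleton_mem x⟩

include hP in
theorem covBy_unique {A B B' : {A // P A}} (h : A ⋖ B) (h' : A ⋖ B') : B = B' := by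
  obtain ⟨x, hx⟩ := hP.nonempty _ A.2
  rcases hP.laminar _ _ B.2 B'.2 x (h.lt.le hx) (h'.lt.le hx) with hle | hle
  · exact (show B ≤ B' from hle).eq_of_not_lt fun hlt => h'.2 h.lt hlt
  · exact ((show B' ≤ B from hle).eq_of_not_lt fun hlt => h.2 h'.lt hlt).symm

theorem exists_covBy_mem {A : {A // P A}} {x : X} (hx : x ∈ A.1) (hA : hP.leaf x ≠ A) :
    ∃ B, B ⋖ A ∧ x ∈ B.1 := by
  obtain ⟨B, hxB, hBA⟩ := exists_le_covBy_of_lt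
    (lt_of_le_of_ne (show hP.leaf x ≤ A from Finset.singleton_subset_iff.2 hx) hA)
  exact ⟨B, hBA, hxB (Finset.mem_singleton_self x)⟩

theorem indeg_top : (hasseDiagram P).indeg hP.top = 0 :=
  indeg_eq_zero_iff.2 fun _ hB => (mem_hasseDiagram.1 hB).lt.not_ge (Finset.subset_univ _)

theorem indeg_eq_one {A : {A // P A}} (hA : A ≠ hP.top) : (hasseDiagram P).indeg A = 1 := by
  obtain ⟨B, hAB, -⟩ := exists_covBy_le_of_lt
    (lt_of_le_of_ne (show A ≤ hP.top from Finset.subset_univ _) hA)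
  exact indeg_eq_one_iff.2 ⟨B, mem_hasseDiagram.2 hAB,
    fun B' hB' => hP.covBy_unique (mem_hasseDiagram.1 hB') hAB⟩

theorem outdeg_leaf (x : X) : (hasseDiagram P).outdeg (hP.leaf x) = 0 :=
  outdeg_eq_zero_iff.2 fun B hB => (hP.nonempty _ B.2).ne_empty
    (Finset.ssubset_singleton_iff.1 (mem_hasseDiagram.1 hB).lt)

theorem two_le_outdeg_of_ne_leaf {A : {A // P A}} (hA : ∀ x, hP.leaf x ≠ A) :
    2 ≤ (hasseDiagram P).outdeg A := by
  obtain ⟨x, hx⟩ := hP.nonempty _ A.2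
  obtain ⟨B, hBA, hxB⟩ := hP.exists_covBy_mem hx (hA x)
  obtain ⟨y, hyA, hyB⟩ := Finset.exists_of_ssubset (show B.1 ⊂ A.1 from hBA.lt)
  obtain ⟨B', hB'A, hyB'⟩ := hP.exists_covBy_mem hyA (hA y)
  exact two_le_outdeg (mem_hasseDiagram.2 hBA) (mem_hasseDiagram.2 hB'A)
    fun h => hyB (h ▸ hyB')

theorem leaf_ne_top (hX : 2 ≤ Fintype.card X) (x : X) : hP.leaf x ≠ hP.top := by
  intro h
  have : ({x} : Finset X).card = Fintype.card X := congrArg (·.1.card) h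
  rw [Finset.card_singleton] at this
  omega

theorem isPhyloTree_hasseDiagram (hX : 2 ≤ Fintype.card X) :
    IsPhyloTree (hasseDiagram P) hP.top hP.leaf := by
  refine ⟨⟨fun A h => (lt_of_transGen_hasseDiagram h).false, ?_, fun A => ?_, fun A => ?_,
    hP.two_le_outdeg_of_ne_leaf fun x => hP.leaf_ne_top hX x, hP.indeg_top,
    fun A hA hleaf =>
      .inl ⟨hP.indeg_eq_one hA, hP.two_le_outdeg_of_ne_leaf (not_exists.1 hleaf)⟩⟩,
    fun A => ?_⟩
  · intro x y h
    exact Finset.singleton_injective (congrArg Subtype.val h)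
  · exact ReflTransGen.mono (fun _ _ => mem_hasseDiagram.2) _ _
      (le_iff_reflTransGen_covBy.1 (show A ≤ hP.top from Finset.subset_univ _)).swap
  · constructor
    · rintro ⟨x, rfl⟩
      exact ⟨hP.indeg_eq_one (hP.leaf_ne_top hX x), hP.outdeg_leaf x⟩
    · rintro ⟨-, hout⟩
      by_contra hleaf
      have := hP.two_le_outdeg_of_ne_leaf (not_exists.1 hleaf)
      omega
  · by_cases hA : A = hP.top
    · rw [hA, hP.indeg_top]; exact zero_le_one
    · rw [hP.indeg_eq_one hA]

end IsHierarchy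

end Hierarchy

namespace IsPhyloNetwork

variable {X V C : Type} {N : Digraph' V} {r : V} {lf : X → V} (hN : IsPhyloNetwork N r lf)

include hN in
theorem finite : Finite V := by
  have h : (Set.univ : Set V) ⊆ insert r ((fun e : V × V => e.2) '' ↑N.edges) := by
    intro v _
    rcases ReflTransGen.cases_tail (hN.reach v) with h | ⟨u, _, hu⟩
    · exact Set.mem_insert_iff.2 (.inl h)
    · exact Set.mem_insert_of_mem _ ⟨(u, v), hu, rfl⟩
  exact Set.finite_univ_iff.1 (((N.edges.finite_toSet.image _).insert r).subset h)

include hN in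
theorem exists_mem_edges {v : V} (hv : v ≠ r) : ∃ u, (u, v) ∈ N.edges := by
  rcases ReflTransGen.cases_tail (hN.reach v) with h | ⟨u, _, hu⟩
  exacts [absurd h hv, ⟨u, hu⟩]

include hN in
theorem notMem_edges_leaf (x : X) (v : V) : (lf x, v) ∉ N.edges :=
  outdeg_eq_zero_iff.1 ((hN.leaf_iff (lf x)).1 ⟨x, rfl⟩).2 v

noncomputable def parent (v : V) : V :=
  if h : v = r then r else (hN.exists_mem_edges h).choose

theorem parent_mem_edges {v : V} (hv : v ≠ r) : (hN.parent v, v) ∈ N.edges := by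
  rw [parent, dif_neg hv]
  exact (hN.exists_mem_edges hv).choose_spec

def ParentStep (v u : V) : Prop := v ≠ r ∧ hN.parent v = u

def IsAnc (a b : V) : Prop := ReflTransGen hN.ParentStep b a

theorem transGen_edges_of_transGen_parentStep {u v : V} (h : TransGen hN.ParentStep u v) :
    TransGen (fun a b => (a, b) ∈ N.edges) v u := by
  induction h with
  | single h => exact .single (h.2 ▸ hN.parent_mem_edges h.1)
  | tail _ h ih => exact .head (h.2 ▸ hN.parent_mem_edges h.1) ih

variable {hN} in
theorem IsAnc.trans {a b c : V} (hab : hN.IsAnc a b) (hbc : hN.IsAnc b c) : hN.IsAnc a c :=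
  ReflTransGen.trans hbc hab

variable {hN} in
theorem IsAnc.antisymm {a b : V} (hab : hN.IsAnc a b) (hba : hN.IsAnc b a) : a = b := by
  rcases reflTransGen_iff_eq_or_transGen.1 hab with h | h
  · exact h
  · exact (hN.acyclic b (hN.transGen_edges_of_transGen_parentStep (h.trans_left hba))).elim

variable {hN} in
theorem IsAnc.total {a b w : V} (ha : hN.IsAnc a w) (hb : hN.IsAnc b w) :
    hN.IsAnc a b ∨ hN.IsAnc b a :=
  (ReflTransGen.total_of_right_unique (fun _ _ _ h h' => h.2.symm.trans h'.2) ha hb).symm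

theorem isAnc_root (v : V) : hN.IsAnc r v := by
  have := hN.finite
  induction v using (wellFounded_of_forall_not_transGen hN.acyclic).induction with
  | _ v ih =>
    by_cases hv : v = r
    · exact hv ▸ ReflTransGen.refl (r := hN.ParentStep)
    · exact .head ⟨hv, rfl⟩ (ih _ (hN.parent_mem_edges hv))

theorem eq_of_isAnc_leaf {x : X} {v : V} (h : hN.IsAnc (lf x) v) : v = lf x := by
  rcases reflTransGen_iff_eq_or_transGen.1 h with h | h
  · exact h.symm
  · obtain ⟨u, -, hu, hpar⟩ := TransGen.tail'_iff.1 h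
    exact (hN.notMem_edges_leaf x u (hpar ▸ hN.parent_mem_edges hu)).elim

variable [Fintype X]

noncomputable def cluster (v : V) : Finset X :=
  Finset.univ.filter fun x => hN.IsAnc v (lf x)

theorem mem_cluster {v : V} {x : X} : x ∈ hN.cluster v ↔ hN.IsAnc v (lf x) := by
  simp [cluster]

theorem cluster_anti {a b : V} (h : hN.IsAnc a b) : hN.cluster b ⊆ hN.cluster a :=
  fun _ hx => (hN.mem_cluster).2 (h.trans ((hN.mem_cluster).1 hx))

theorem cluster_root : hN.cluster r = Finset.univ :=
  Finset.eq_univ_of_forall fun _ => (hN.mem_cluster).2 (hN.isAnc_root _)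

theorem cluster_leaf (x : X) : hN.cluster (lf x) = {x} := by
  ext y
  rw [mem_cluster, Finset.mem_singleton]
  exact ⟨fun h => hN.leaf_inj (hN.eq_of_isAnc_leaf h), fun h => h ▸ ReflTransGen.refl⟩

def IsCluster (A : Finset X) : Prop :=
  A.Nonempty ∧ ∃ v, hN.cluster v = A

theorem isHierarchy_isCluster [Nonempty X] : IsHierarchy hN.IsCluster where
  univ_mem := ⟨Finset.univ_nonempty, r, hN.cluster_root⟩
  singleton_mem x := ⟨Finset.singleton_nonempty x, lf x, hN.cluster_leaf x⟩
  nonempty _ hA := hA.1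
  laminar := by
    rintro _ _ ⟨-, u, rfl⟩ ⟨-, v, rfl⟩ x hu hv
    rcases ((hN.mem_cluster).1 hu).total ((hN.mem_cluster).1 hv) with h | h
    exacts [.inr (hN.cluster_anti h), .inl (hN.cluster_anti h)]

theorem exists_lowest {A : Finset X} (hA : hN.IsCluster A) :
    ∃ v, hN.cluster v = A ∧ ∀ u, hN.cluster u = A → hN.IsAnc u v := by
  obtain ⟨⟨x, hx⟩, hS⟩ := hA
  have := hN.finite
  have hwf : WellFounded (TransGen hN.ParentStep) :=
    (wellFounded_of_forall_not_transGen fun v h =>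
      hN.acyclic v (hN.transGen_edges_of_transGen_parentStep h)).transGen
  obtain ⟨v, hv, hmin⟩ := hwf.has_min {v | hN.cluster v = A} hS
  refine ⟨v, hv, fun u hu => ?_⟩
  have hxu := (hN.mem_cluster).1 (hu ▸ hx : x ∈ hN.cluster u)
  have hxv := (hN.mem_cluster).1 (hv ▸ hx : x ∈ hN.cluster v)
  refine (hxu.total hxv).elim id fun hvu => ?_
  rcases reflTransGen_iff_eq_or_transGen.1 hvu with h | h
  exacts [h ▸ ReflTransGen.refl, (hmin u hu h).elim]

noncomputable def lowest (A : {A // hN.IsCluster A}) : V :=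
  (hN.exists_lowest A.2).choose

theorem cluster_lowest (A : {A // hN.IsCluster A}) : hN.cluster (hN.lowest A) = A.1 :=
  (hN.exists_lowest A.2).choose_spec.1

theorem isAnc_lowest {A : {A // hN.IsCluster A}} {u : V} (hu : hN.cluster u = A.1) :
    hN.IsAnc u (hN.lowest A) :=
  (hN.exists_lowest A.2).choose_spec.2 u hu

theorem lowest_singleton (x : X) (hx : hN.IsCluster {x}) : hN.lowest ⟨{x}, hx⟩ = lf x :=
  hN.eq_of_isAnc_leaf (hN.isAnc_lowest (A := ⟨{x}, hx⟩) (hN.cluster_leaf x))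

theorem exists_changing_edge_of_covBy {A B : {A // hN.IsCluster A}} (hBA : B ⋖ A) {f : V → C}
    (hf : f (hN.lowest A) ≠ f (hN.lowest B)) :
    ∃ c, c ≠ r ∧ hN.cluster c = B.1 ∧ f (hN.parent c) ≠ f c := by
  set a := hN.lowest A
  -- walking up from `lowest B` to `a`, every vertex strictly below `a` has cluster `B`
  have walk : ∀ c, hN.IsAnc a c → B.1 ⊆ hN.cluster c → f c ≠ f a →
      ∃ c, c ≠ r ∧ hN.cluster c = B.1 ∧ f (hN.parent c) ≠ f c := by
    intro c hac
    induction hac using ReflTransGen.head_induction_on with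
    | refl => exact fun _ h => (h rfl).elim
    | @head c c' hstep hc'a ih =>
      intro hBc hfc
      have hca : hN.IsAnc a c := hc'a.head hstep
      have hcA : hN.cluster c ⊆ A.1 := hN.cluster_lowest A ▸ hN.cluster_anti hca
      have hcA' : hN.cluster c ≠ A.1 := fun h =>
        hfc (congrArg f ((hN.isAnc_lowest h).antisymm hca))
      have hcB : hN.cluster c = B.1 := by
        by_contra hcB
        exact hBA.2 (c := ⟨hN.cluster c, B.2.1.mono hBc, c, rfl⟩)
          (lt_of_le_of_ne hBc fun h => hcB (congrArg Subtype.val h).symm)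
          (lt_of_le_of_ne hcA fun h => hcA' (congrArg Subtype.val h))
      by_cases hpar : f (hN.parent c) = f c
      · exact ih (hBc.trans (hN.cluster_anti (.single hstep))) (hstep.2 ▸ hpar ▸ hfc)
      · exact ⟨c, hstep.1, hcB, hpar⟩
  obtain ⟨x, hx⟩ := B.2.1
  have hxa : hN.IsAnc a (lf x) :=
    (hN.mem_cluster).1 ((hN.cluster_lowest A).symm ▸ hBA.lt.le hx)
  have hxb : hN.IsAnc (hN.lowest B) (lf x) :=
    (hN.mem_cluster).1 ((hN.cluster_lowest B).symm ▸ hx)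
  refine walk _ ((hxa.total hxb).resolve_right fun hba => ?_)
    (hN.cluster_lowest B).ge (Ne.symm hf)
  have := hN.cluster_anti hba
  rw [hN.cluster_lowest, hN.cluster_lowest] at this
  exact hBA.lt.not_ge this

theorem ch_hasseDiagram_le [Nonempty X] (f : V → C) :
    ch (hasseDiagram hN.IsCluster) (fun A => f (hN.lowest A)) ≤ ch N f := by
  set s := (hasseDiagram hN.IsCluster).edges.filter fun e =>
    f (hN.lowest e.1) ≠ f (hN.lowest e.2)
  set t := N.edges.filter fun e => f e.1 ≠ f e.2
  have hinj : Set.InjOn (fun e : {A // hN.IsCluster A} × {A // hN.IsCluster A} => e.2.1) s := by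
    intro e he e' he' h
    have h2 : e.2 = e'.2 := Subtype.ext h
    exact Prod.ext (hN.isHierarchy_isCluster.covBy_unique
      (mem_hasseDiagram.1 (Finset.mem_filter.1 he).1)
      (h2 ▸ mem_hasseDiagram.1 (Finset.mem_filter.1 he').1)) h2
  have hsub : s.image (fun e => e.2.1) ⊆ t.image fun e => hN.cluster e.2 := by
    intro B hB
    obtain ⟨⟨A, B⟩, he, rfl⟩ := Finset.mem_image.1 hB
    obtain ⟨hAB, hf⟩ := Finset.mem_filter.1 he
    obtain ⟨c, hc, hcB, hfc⟩ := hN.exists_changing_edge_of_covBy (mem_hasseDiagram.1 hAB) hf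
    exact Finset.mem_image.2
      ⟨(hN.parent c, c), Finset.mem_filter.2 ⟨hN.parent_mem_edges hc, hfc⟩, hcB⟩
  calc s.card = (s.image fun e => e.2.1).card := (Finset.card_image_of_injOn hinj).symm
    _ ≤ (t.image fun e => hN.cluster e.2).card := Finset.card_le_card hsub
    _ ≤ t.card := Finset.card_image_le

include hN in
theorem exists_isPhyloTree_psHardSeq_le (hX : 2 ≤ Fintype.card X) {k : ℕ}
    (S : Fin k → X → C) :
    ∃ (W : Type) (T : Digraph' W) (rootT : W) (leafT : X → W),
      IsPhyloTree T rootT leafT ∧ psHardSeq T leafT S ≤ psHardSeq N lf S := by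
  have hX' : Nonempty X := Fintype.card_pos_iff.1 (by omega)
  have hP := hN.isHierarchy_isCluster
  refine ⟨_, hasseDiagram hN.IsCluster, hP.top, hP.leaf, hP.isPhyloTree_hasseDiagram hX,
    Finset.sum_le_sum fun i _ => ?_⟩
  have : Nonempty C := hX'.map (S i)
  refine psHard_le_of_forall_extends (exists_extends hN.leaf_inj _) fun f hf =>
    ⟨_, fun x => ?_, hN.ch_hasseDiagram_le f⟩
  exact (congrArg f (hN.lowest_singleton x _)).trans (hf x)

end IsPhyloNetwork

end Digraph'

/-- there is always a rooted phylogenetic tree that is a hardwired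
    MP network. -/
theorem stmt3 {X C : Type} [Fintype X] (hX : 2 ≤ Fintype.card X)
    {k : ℕ} (S : Fin k → X → C) :
    ∃ (W : Type) (T : Digraph' W) (rootT : W) (leafT : X → W),
      IsPhyloTree T rootT leafT ∧
      ∀ (V : Type) (N : Digraph' V) (rootN : V) (leafN : X → V),
        IsPhyloNetwork N rootN leafN → psHardSeq T leafT S ≤ psHardSeq N leafN S := by
  have : Nonempty X := Fintype.card_pos_iff.1 (by omega)
  have hscore : ∃ n, ∃ (W : Type) (T : Digraph' W) (rootT : W) (leafT : X → W),
      IsPhyloTree T rootT leafT ∧ psHardSeq T leafT S = n :=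
    ⟨_, _, _, _, _, isHierarchy_star.isPhyloTree_hasseDiagram hX, rfl⟩
  obtain ⟨W, T, rootT, leafT, hT, hTS⟩ := Nat.find_spec hscore
  refine ⟨W, T, rootT, leafT, hT, fun V N rootN leafN hN => ?_⟩
  obtain ⟨W', T', rootT', leafT', hT', hle⟩ := hN.exists_isPhyloTree_psHardSeq_le hX S
  exact hTS ▸ (Nat.find_min' hscore ⟨W', T', rootT', leafT', hT', rfl⟩).trans hle
end

section
/- Assume the Tuffley–Steel theorem: for every rooted phylogenetic tree T on X and every sequence S of k characters with at most r states each, max P(S | T) = r^{−PS(S,T)−k} under the N_r-model with no common mechanism. Then for every rooted phylogenetic network N on X, the softwired pseudo-maximum-likelihood satisfies max P_soft(S | N) = r^{−PS_soft(S,N)−k}. Consequently softwired maximum parsimony and softwired pseudo-maximum-likelihood select exactly the same optimal networks. -/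
open scoped Classical

open Digraph'

/-!
Under the Tuffley–Steel identity the likelihood of a displayed tree is `r ^ (-PS - 1)`, a
strictly decreasing function of its parsimony score. The best displayed tree for a character is
therefore the most parsimonious one, so the softwired pseudo-likelihood is `r ^ (-PS_soft - 1)`;
taking the product over the characters adds the exponents. As `r ≥ 2`, comparing these powers of
`r` is the same as comparing the softwired scores.
-/

theorem Finset.prod_zpow_eq_zpow_sum {ι G₀ : Type*} [CommGroupWithZero G₀] {a : G₀} (ha : a ≠ 0)
    (s : Finset ι) (f : ι → ℤ) : ∏ i ∈ s, a ^ f i = a ^ ∑ i ∈ s, f i :=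
  Finset.cons_induction (by simp)
    (fun _ _ _ ih => by rw [Finset.prod_cons, Finset.sum_cons, zpow_add₀ ha, ih]) s

theorem Nat.isGreatest_image_sInf {α : Type*} [Preorder α] {f : ℕ → α} (hf : Antitone f)
    {A : Set ℕ} (hA : A.Nonempty) : IsGreatest (f '' A) (f (sInf A)) :=
  ⟨Set.mem_image_of_mem f (Nat.sInf_mem hA),
    Set.forall_mem_image.2 fun _ hn => hf (Nat.sInf_le hn)⟩

namespace Digraph'

section TuffleySteel

variable {V X C : Type} {r : ℕ} {maxPtree : ∀ W : Type, Digraph' W → W → (X → W) → (X → C) → ℝ}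

theorem sSup_maxPtree_displayed_eq (hr : 1 ≤ r)
    (hTS : ∀ (W : Type) (T : Digraph' W) (rootT : W) (leafT : X → W) (χ : X → C),
      IsPhyloTree T rootT leafT →
      maxPtree W T rootT leafT χ = (r : ℝ) ^ (-(psHard T leafT χ : ℤ) - 1))
    {N : Digraph' V} {leafN : X → V}
    (hdisp : ∃ (W : Type) (T : Digraph' W) (rootT : W) (leafT : X → W),
      IsPhyloTree T rootT leafT ∧ Displays N leafN T leafT)
    (χ : X → C) :
    sSup {y : ℝ | ∃ (W : Type) (T : Digraph' W) (rootT : W) (leafT : X → W),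
        IsPhyloTree T rootT leafT ∧ Displays N leafN T leafT ∧
        y = maxPtree W T rootT leafT χ} =
      (r : ℝ) ^ (-(psSoft N leafN χ : ℤ) - 1) := by
  set scores : Set ℕ := {n | ∃ (W : Type) (T : Digraph' W) (rootT : W) (leafT : X → W),
    IsPhyloTree T rootT leafT ∧ Displays N leafN T leafT ∧ psHard T leafT χ = n}
  have hscores : scores.Nonempty := by
    obtain ⟨W, T, rootT, leafT, hT, hTN⟩ := hdisp
    exact ⟨_, W, T, rootT, leafT, hT, hTN, rfl⟩
  have hlik : {y : ℝ | ∃ (W : Type) (T : Digraph' W) (rootT : W) (leafT : X → W),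
      IsPhyloTree T rootT leafT ∧ Displays N leafN T leafT ∧
      y = maxPtree W T rootT leafT χ} = (fun n : ℕ => (r : ℝ) ^ (-(n : ℤ) - 1)) '' scores := by
    ext y
    constructor
    · rintro ⟨W, T, rootT, leafT, hT, hTN, rfl⟩
      exact ⟨_, ⟨W, T, rootT, leafT, hT, hTN, rfl⟩, (hTS W T rootT leafT χ hT).symm⟩
    · rintro ⟨_, ⟨W, T, rootT, leafT, hT, hTN, rfl⟩, rfl⟩
      exact ⟨W, T, rootT, leafT, hT, hTN, (hTS W T rootT leafT χ hT).symm⟩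
  have hanti : Antitone fun n : ℕ => (r : ℝ) ^ (-(n : ℤ) - 1) := fun m n hmn =>
    zpow_le_zpow_right₀ (by exact_mod_cast hr) (by omega)
  rw [hlik]
  exact (Nat.isGreatest_image_sInf hanti hscores).csSup_eq

theorem prod_sSup_maxPtree_displayed_eq (hr : 1 ≤ r)
    (hTS : ∀ (W : Type) (T : Digraph' W) (rootT : W) (leafT : X → W) (χ : X → C),
      IsPhyloTree T rootT leafT →
      maxPtree W T rootT leafT χ = (r : ℝ) ^ (-(psHard T leafT χ : ℤ) - 1))
    {N : Digraph' V} {leafN : X → V}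
    (hdisp : ∃ (W : Type) (T : Digraph' W) (rootT : W) (leafT : X → W),
      IsPhyloTree T rootT leafT ∧ Displays N leafN T leafT)
    {k : ℕ} (S : Fin k → X → C) :
    (∏ i, sSup {y : ℝ | ∃ (W : Type) (T : Digraph' W) (rootT : W) (leafT : X → W),
        IsPhyloTree T rootT leafT ∧ Displays N leafN T leafT ∧
        y = maxPtree W T rootT leafT (S i)}) =
      (r : ℝ) ^ (-(psSoftSeq N leafN S : ℤ) - k) := by
  simp_rw [sSup_maxPtree_displayed_eq hr hTS hdisp]
  rw [Finset.prod_zpow_eq_zpow_sum (by positivity), psSoftSeq]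
  simp [Finset.sum_sub_distrib]

end TuffleySteel

end Digraph'

theorem stmt13_general {V X C : Type} (r : ℕ) (hr : 2 ≤ r) {k : ℕ}
    (maxPtree : ∀ W : Type, Digraph' W → W → (X → W) → (X → C) → ℝ)
    (hTS : ∀ (W : Type) (T : Digraph' W) (rootT : W) (leafT : X → W) (χ : X → C),
      IsPhyloTree T rootT leafT →
      maxPtree W T rootT leafT χ = (r : ℝ) ^ (-(psHard T leafT χ : ℤ) - 1))
    (N : Digraph' V) (leafN : X → V)
    (hdisp : ∃ (W : Type) (T : Digraph' W) (rootT : W) (leafT : X → W),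
      IsPhyloTree T rootT leafT ∧ Displays N leafN T leafT)
    (S : Fin k → X → C) :
    (∏ i, sSup {y : ℝ | ∃ (W : Type) (T : Digraph' W) (rootT : W) (leafT : X → W),
        IsPhyloTree T rootT leafT ∧ Displays N leafN T leafT ∧
        y = maxPtree W T rootT leafT (S i)}) =
      (r : ℝ) ^ (-(psSoftSeq N leafN S : ℤ) - k) ∧
    ∀ (V' : Type) (N' : Digraph' V') (rootN' : V') (leafN' : X → V'),
      IsPhyloNetwork N' rootN' leafN' →
      (∃ (W : Type) (T : Digraph' W) (rootT : W) (leafT : X → W),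
        IsPhyloTree T rootT leafT ∧ Displays N' leafN' T leafT) →
      (psSoftSeq N leafN S ≤ psSoftSeq N' leafN' S ↔
        (∏ i, sSup {y : ℝ | ∃ (W : Type) (T : Digraph' W) (rootT : W) (leafT : X → W),
          IsPhyloTree T rootT leafT ∧ Displays N' leafN' T leafT ∧
          y = maxPtree W T rootT leafT (S i)}) ≤
        ∏ i, sSup {y : ℝ | ∃ (W : Type) (T : Digraph' W) (rootT : W) (leafT : X → W),
          IsPhyloTree T rootT leafT ∧ Displays N leafN T leafT ∧
          y = maxPtree W T rootT leafT (S i)}) := by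
  have hpml := prod_sSup_maxPtree_displayed_eq (by omega) hTS hdisp S
  refine ⟨hpml, fun V' N' rootN' leafN' _ hdisp' => ?_⟩
  rw [hpml, prod_sSup_maxPtree_displayed_eq (by omega) hTS hdisp' S,
    zpow_le_zpow_iff_right₀ (by exact_mod_cast hr)]
  omega

/-- assuming the Tuffley–Steel identity for trees, the softwired
    pseudo-ML of a network equals r^(−PS_soft−k); hence softwired MP and softwired
    pseudo-ML select the same networks. -/
theorem stmt13 {V X C : Type} (r : ℕ) (hr : 2 ≤ r) {k : ℕ}
    (maxPtree : ∀ W : Type, Digraph' W → W → (X → W) → (X → C) → ℝ)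
    (hTS : ∀ (W : Type) (T : Digraph' W) (rootT : W) (leafT : X → W) (χ : X → C),
      IsPhyloTree T rootT leafT →
      maxPtree W T rootT leafT χ = (r : ℝ) ^ (-(psHard T leafT χ : ℤ) - 1))
    (N : Digraph' V) (rootN : V) (leafN : X → V) (hN : IsPhyloNetwork N rootN leafN)
    (hdisp : ∃ (W : Type) (T : Digraph' W) (rootT : W) (leafT : X → W),
      IsPhyloTree T rootT leafT ∧ Displays N leafN T leafT)
    (S : Fin k → X → C) :
    (∏ i, sSup {y : ℝ | ∃ (W : Type) (T : Digraph' W) (rootT : W) (leafT : X → W),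
        IsPhyloTree T rootT leafT ∧ Displays N leafN T leafT ∧
        y = maxPtree W T rootT leafT (S i)}) =
      (r : ℝ) ^ (-(psSoftSeq N leafN S : ℤ) - k) ∧
    ∀ (V' : Type) (N' : Digraph' V') (rootN' : V') (leafN' : X → V'),
      IsPhyloNetwork N' rootN' leafN' →
      (∃ (W : Type) (T : Digraph' W) (rootT : W) (leafT : X → W),
        IsPhyloTree T rootT leafT ∧ Displays N' leafN' T leafT) →
      (psSoftSeq N leafN S ≤ psSoftSeq N' leafN' S ↔
        (∏ i, sSup {y : ℝ | ∃ (W : Type) (T : Digraph' W) (rootT : W) (leafT : X → W),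
          IsPhyloTree T rootT leafT ∧ Displays N' leafN' T leafT ∧
          y = maxPtree W T rootT leafT (S i)}) ≤
        ∏ i, sSup {y : ℝ | ∃ (W : Type) (T : Digraph' W) (rootT : W) (leafT : X → W),
          IsPhyloTree T rootT leafT ∧ Displays N leafN T leafT ∧
          y = maxPtree W T rootT leafT (S i)}) :=
  stmt13_general r hr maxPtree hTS N leafN hdisp S
end

section
/- There exist a rooted phylogenetic network N on X = {1,2,3,4} with exactly one reticulation displaying exactly two trees T₁ and T₂, a 2-state character χ on X with PS(χ,T₁) = 1 and PS(χ,T₂) = 2, and a probability distribution P(T₁|N,χ) = 1/4, P(T₂|N,χ) = 3/4 on the displayed trees, such that the weighted softwired maximum likelihood max_{T ∈ {T₁,T₂}} P(T|N,χ)·max P(χ|T) equals 3/32 ≠ 2^{−PS_soft(χ,N)−1} = 1/4 and is attained by T₂ rather than the tree T₁ of smaller parsimony score. -/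
open scoped Classical

/-!
The network `net` has root `0`, leaves `5, 6, 7, 8` and a single reticulation `4` with parents
`1` and `2`. A tree displayed by `net` is routed along edge-disjoint paths that never enter a
vertex along two different edges, so it avoids one of `(1, 4)`, `(2, 4)` and is displayed by the
corresponding switching. In both switchings every vertex has out-degree at most two and exactly
three vertices branch, so the displayed tree is binary with its three internal vertices sent
onto the branching ones; its edges are then forced, giving `((0,1),(2,3))` or `(0,(3,(1,2)))`.
On the character `0011` these trees need one and two changes, and no tree needs zero since the
character is not constant, so the softwired score is `1`, whereas the weights `1/4` and `3/4`
favour the second tree: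
`max (1/4 · 2⁻², 3/4 · 2⁻³) = 3/32 ≠ 2⁻²`.
-/

namespace Digraph'

variable {V W W' X C : Type}

section Paths

variable {α : Type}

lemma pathEdges_cons_cons (a b : α) (t : List α) :
    pathEdges (a :: b :: t) = (a, b) :: pathEdges (b :: t) := rfl

lemma internalVerts_cons_cons_cons (a b c : α) (t : List α) :
    internalVerts (a :: b :: c :: t) = b :: internalVerts (b :: c :: t) := rfl

lemma isChain_iff_forall_mem_pathEdges {R : α → α → Prop} {l : List α} :
    l.IsChain R ↔ ∀ p ∈ pathEdges l, R p.1 p.2 := by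
  induction l using List.twoStepInduction with
  | nil | singleton => simp [pathEdges]
  | cons_cons a b t _ ih => simp [List.isChain_cons_cons, pathEdges_cons_cons, ih]

lemma exists_mem_pathEdges_of_head? {l : List α} {a : α} (hl : 2 ≤ l.length)
    (ha : l.head? = some a) : ∃ b, (a, b) ∈ pathEdges l := by
  match l, hl with
  | a' :: b :: t, _ =>
    obtain rfl : a' = a := Option.some.inj ha
    exact ⟨b, by simp [pathEdges_cons_cons]⟩

lemma mem_internalVerts_or_getLast?_of_mem_pathEdges {l : List α} {u v : α}
    (h : (u, v) ∈ pathEdges l) : v ∈ internalVerts l ∨ l.getLast? = some v := by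
  have hv : v ∈ l.tail := (List.of_mem_zip h).2
  have hne : l.tail ≠ [] := List.ne_nil_of_mem hv
  rw [← List.dropLast_append_getLast hne, List.mem_append, List.mem_singleton] at hv
  rcases hv with hv | rfl
  · exact .inl (by simpa [internalVerts, List.drop_one] using hv)
  · right
    rw [List.getLast_tail, List.getLast?_eq_some_getLast]

lemma fst_eq_of_nodup_of_mem_pathEdges {l : List α} (hl : l.Nodup) {u u' v : α}
    (h : (u, v) ∈ pathEdges l) (h' : (u', v) ∈ pathEdges l) : u = u' := by
  induction l using List.twoStepInduction with
  | nil | singleton => simp [pathEdges] at h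
  | cons_cons a b t _ ih =>
    have hb : b ∉ t := (List.nodup_cons.mp (List.nodup_cons.mp hl).2).1
    rw [pathEdges_cons_cons, List.mem_cons] at h h'
    rcases h with h | h <;> rcases h' with h' | h'
    · simp_all
    · obtain rfl : v = b := (Prod.mk.inj h).2
      exact absurd (List.of_mem_zip h').2 hb
    · obtain rfl : v = b := (Prod.mk.inj h').2
      exact absurd (List.of_mem_zip h).2 hb
    · exact ih b (List.nodup_cons.mp hl).2 h h'

theorem rel_head_last_of_isChain {R : α → α → Prop} {A : Set α} {Q : α → α → Prop}
    (hedge : ∀ b z, R b z → Q b z) (hstep : ∀ b c z, R b c → c ∉ A → Q c z → Q b z)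
    {l : List α} {a z : α} (hc : l.IsChain R) (hl : 2 ≤ l.length) (ha : l.head? = some a)
    (hz : l.getLast? = some z) (hint : ∀ w ∈ internalVerts l, w ∉ A) : Q a z := by
  induction l generalizing a with
  | nil => simp at hl
  | cons a' t ih =>
    obtain rfl : a' = a := Option.some.inj ha
    match t, hc with
    | [], _ => simp at hl
    | [b], hc =>
      obtain rfl : b = z := by simpa using hz
      exact hedge a' b (List.isChain_pair.mp hc)
    | b :: c :: s, hc =>
      rw [List.isChain_cons_cons] at hc
      rw [internalVerts_cons_cons_cons] at hint
      refine hstep a' b z hc.1 (hint b List.mem_cons_self) ?_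
      exact ih hc.2 (by simp) rfl (by simpa using hz) fun w hw =>
        hint w (List.mem_cons_of_mem _ hw)

end Paths

section Degrees

-- `indeg`, `outdeg` and `ch` filter with classical decidability, which `decide` cannot
-- evaluate.
lemma indeg_eq_card_filter [DecidableEq V] (G : Digraph' V) (v : V) :
    G.indeg v = (G.edges.filter fun e => e.2 = v).card := by
  unfold indeg; congr

lemma outdeg_eq_card_filter [DecidableEq V] (G : Digraph' V) (v : V) :
    G.outdeg v = (G.edges.filter fun e => e.1 = v).card := by
  unfold outdeg; congr

lemma ch_eq_card_filter [DecidableEq C] (G : Digraph' V) (f : V → C) :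
    G.ch f = (G.edges.filter fun e => f e.1 ≠ f e.2).card := by
  unfold ch; congr

lemma sum_indeg [Fintype V] (G : Digraph' V) : ∑ v, G.indeg v = G.edges.card :=
  (Finset.card_eq_sum_card_fiberwise fun e _ => Finset.mem_univ e.2).symm

lemma sum_outdeg [Fintype V] (G : Digraph' V) : ∑ v, G.outdeg v = G.edges.card :=
  (Finset.card_eq_sum_card_fiberwise fun e _ => Finset.mem_univ e.1).symm

lemma eq_of_indeg_le_one {G : Digraph' V} {v : V} (hv : G.indeg v ≤ 1) {e e' : V × V}
    (he : e ∈ G.edges) (he' : e' ∈ G.edges) (hev : e.2 = v) (he'v : e'.2 = v) : e = e' :=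
  Finset.card_le_one.mp hv e (Finset.mem_filter.mpr ⟨he, hev⟩) e'
    (Finset.mem_filter.mpr ⟨he', he'v⟩)

lemma acyclic_of_rank {G : Digraph' V} (r : V → ℕ) (hr : ∀ e ∈ G.edges, r e.1 < r e.2) :
    G.Acyclic := by
  intro v hv
  have hlt : ∀ a b, Relation.TransGen (fun a b => (a, b) ∈ G.edges) a b → r a < r b := by
    intro a b hab
    induction hab with
    | single h => exact hr _ h
    | tail _ h ih => exact ih.trans (hr _ h)
  exact lt_irrefl _ (hlt v v hv)

lemma reflTransGen_of_rank {G : Digraph' V} {root : V} (r : V → ℕ)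
    (hr : ∀ e ∈ G.edges, r e.1 < r e.2)
    (hparent : ∀ v, v ≠ root → ∃ u, (u, v) ∈ G.edges)
    (v : V) : Relation.ReflTransGen (fun a b => (a, b) ∈ G.edges) root v := by
  induction hv : r v using Nat.strong_induction_on generalizing v with
  | _ n ih =>
    by_cases hroot : v = root
    · exact hroot ▸ .refl
    · obtain ⟨u, hu⟩ := hparent v hroot
      exact .tail (ih (r u) (hv ▸ hr _ hu) u rfl) hu

end Degrees

namespace IsPhyloTree

variable {T : Digraph' W} {root : W} {leaf : X → W}

lemma indeg_eq_one (hT : IsPhyloTree T root leaf) {w : W} (hw : w ≠ root) : T.indeg w = 1 := by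
  by_cases hleaf : ∃ x, leaf x = w
  · exact ((hT.1.leaf_iff w).mp hleaf).1
  · rcases hT.1.internal w hw hleaf with ⟨h, -⟩ | ⟨h, -⟩
    · exact h
    · exact absurd (h.trans (hT.2 w)) (by norm_num)

lemma two_le_outdeg (hT : IsPhyloTree T root leaf) {w : W} (hw : ¬∃ x, leaf x = w) :
    2 ≤ T.outdeg w := by
  by_cases hroot : w = root
  · exact hroot ▸ hT.1.root_out
  · rcases hT.1.internal w hroot hw with ⟨-, h⟩ | ⟨h, -⟩
    · exact h
    · exact absurd (h.trans (hT.2 w)) (by norm_num)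

lemma card_edges_add_one [Fintype W] (hT : IsPhyloTree T root leaf) :
    T.edges.card + 1 = Fintype.card W := by
  rw [← sum_indeg, ← Finset.add_sum_erase _ _ (Finset.mem_univ root), hT.1.root_in,
    Finset.sum_congr rfl fun w hw => hT.indeg_eq_one (Finset.ne_of_mem_erase hw)]
  have : 0 < Fintype.card W := Fintype.card_pos_iff.mpr ⟨root⟩
  simp only [Finset.sum_const, smul_eq_mul, mul_one, zero_add,
    Finset.card_erase_of_mem (Finset.mem_univ root), Finset.card_univ]
  omega

end IsPhyloTree

lemma IsBinaryPhyloTree.card_add_one [Fintype W] [Fintype X] {T : Digraph' W} {root : W}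
    {leaf : X → W} (hT : IsBinaryPhyloTree T root leaf) :
    Fintype.card W + 1 = 2 * Fintype.card X := by
  set I := Finset.univ.filter fun w => ¬∃ x, leaf x = w
  have hL : (Finset.univ.filter fun w => ∃ x, leaf x = w).card = Fintype.card X := by
    rw [← Finset.card_univ, ← Finset.card_image_of_injective _ hT.1.1.leaf_inj]
    congr 1; ext; simp
  have hsplit : Fintype.card X + I.card = Fintype.card W := by
    rw [← hL, Finset.card_filter_add_card_filter_not, Finset.card_univ]
  have hout : ∀ w, T.outdeg w = if ∃ x, leaf x = w then 0 else 2 := by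
    intro w
    split_ifs with hw
    · exact ((hT.1.1.leaf_iff w).mp hw).2
    · by_cases hroot : w = root
      · exact hroot ▸ hT.2.1
      · exact hT.2.2 w hroot hw
  have hsum : 2 * I.card = T.edges.card := by
    rw [← sum_outdeg, Finset.sum_congr rfl fun w _ => hout w, Finset.sum_ite]
    simp [I, mul_comm]
  have := hT.1.card_edges_add_one
  omega

/-- `Displays N leafN T leafT` unfolds to
`∃ φ, φ.Injective ∧ (∀ x, φ (leafT x) = leafN x) ∧ ∃ P, IsPathSystem N T φ P`. -/
def IsPathSystem (N : Digraph' V) (T : Digraph' W) (φ : W → V) (P : W → W → List V) : Prop :=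
  ∀ e ∈ T.edges,
    (P e.1 e.2).IsChain (fun a b => (a, b) ∈ N.edges) ∧
    (P e.1 e.2).head? = some (φ e.1) ∧
    (P e.1 e.2).getLast? = some (φ e.2) ∧
    2 ≤ (P e.1 e.2).length ∧
    (P e.1 e.2).Nodup ∧
    (∀ w ∈ internalVerts (P e.1 e.2), w ∉ Set.range φ) ∧
    ∀ e' ∈ T.edges, e ≠ e' →
      (∀ w ∈ internalVerts (P e.1 e.2), w ∉ internalVerts (P e'.1 e'.2)) ∧
      ∀ p ∈ pathEdges (P e.1 e.2), p ∉ pathEdges (P e'.1 e'.2)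

namespace IsPathSystem

variable {N : Digraph' V} {T : Digraph' W} {φ : W → V} {P : W → W → List V}

lemma displays {leafN : X → V} {leafT : X → W} (hP : IsPathSystem N T φ P)
    (hφ : Function.Injective φ) (hleaf : ∀ x, φ (leafT x) = leafN x) :
    Displays N leafN T leafT :=
  ⟨φ, hφ, hleaf, P, hP⟩

lemma outdeg_le (hP : IsPathSystem N T φ P) (w : W) : T.outdeg w ≤ N.outdeg (φ w) := by
  refine Finset.card_le_card_of_forall_subsingleton (fun e p => p ∈ pathEdges (P e.1 e.2)) ?_ ?_
  · intro e he
    obtain ⟨heT, rfl⟩ := Finset.mem_filter.mp he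
    obtain ⟨hc, hh, -, hlen, -⟩ := hP e heT
    obtain ⟨b, hb⟩ := exists_mem_pathEdges_of_head? hlen hh
    exact ⟨_, Finset.mem_filter.mpr ⟨isChain_iff_forall_mem_pathEdges.mp hc _ hb, rfl⟩, hb⟩
  · rintro p - e ⟨he, hpe⟩ e' ⟨he', hpe'⟩
    by_contra hne
    obtain ⟨-, -, -, -, -, -, hdisj⟩ := hP e (Finset.mem_filter.mp he).1
    exact (hdisj e' (Finset.mem_filter.mp he').1 hne).2 p hpe hpe'

lemma isBinaryPhyloTree (hP : IsPathSystem N T φ P) {root : W} {leaf : X → W}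
    (hT : IsPhyloTree T root leaf) (hdeg : ∀ v, N.outdeg v ≤ 2) :
    IsBinaryPhyloTree T root leaf := by
  have hbin : ∀ w, (¬∃ x, leaf x = w) → T.outdeg w = 2 := fun w hw =>
    le_antisymm ((hP.outdeg_le w).trans (hdeg _)) (hT.two_le_outdeg hw)
  refine ⟨hT, hbin root ?_, fun w _ hw => hbin w hw⟩
  rintro ⟨x, hx⟩
  have := ((hT.1.leaf_iff root).mp ⟨x, hx⟩).1
  rw [hT.1.root_in] at this
  exact absurd this (by norm_num)

lemma fst_eq_of_mem_pathEdges (hP : IsPathSystem N T φ P) (hφ : Function.Injective φ)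
    (hT : ∀ w, T.indeg w ≤ 1) {e e' : W × W} (he : e ∈ T.edges) (he' : e' ∈ T.edges)
    {u u' v : V} (h : (u, v) ∈ pathEdges (P e.1 e.2)) (h' : (u', v) ∈ pathEdges (P e'.1 e'.2)) :
    u = u' := by
  obtain ⟨-, -, hlast, -, hnd, hint, hdisj⟩ := hP e he
  obtain ⟨-, -, hlast', -, -, hint', -⟩ := hP e' he'
  by_cases hee : e = e'
  · subst hee
    exact fst_eq_of_nodup_of_mem_pathEdges hnd h h'
  exfalso
  rcases mem_internalVerts_or_getLast?_of_mem_pathEdges h with hv | hv <;>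
    rcases mem_internalVerts_or_getLast?_of_mem_pathEdges h' with hv' | hv'
  · exact (hdisj e' he' hee).1 v hv hv'
  · exact hint v hv ⟨e'.2, Option.some.inj (hlast'.symm.trans hv')⟩
  · exact hint' v hv' ⟨e.2, Option.some.inj (hlast.symm.trans hv)⟩
  · have h2 : e.2 = e'.2 :=
      hφ (Option.some.inj ((hlast.symm.trans hv).trans (hlast'.symm.trans hv').symm))
    exact hee (eq_of_indeg_le_one (hT e.2) he he' rfl h2.symm)

lemma forall_not_mem_or_forall_not_mem (hP : IsPathSystem N T φ P)
    (hφ : Function.Injective φ) (hT : ∀ w, T.indeg w ≤ 1) {u u' v : V} (hu : u ≠ u') :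
    (∀ e ∈ T.edges, (u, v) ∉ pathEdges (P e.1 e.2)) ∨
      ∀ e ∈ T.edges, (u', v) ∉ pathEdges (P e.1 e.2) := by
  by_contra! h
  obtain ⟨⟨e, he, h⟩, ⟨e', he', h'⟩⟩ := h
  exact hu (hP.fst_eq_of_mem_pathEdges hφ hT he he' h h')

lemma erase [DecidableEq V] (hP : IsPathSystem N T φ P) {ex : V × V}
    (hex : ∀ e ∈ T.edges, ex ∉ pathEdges (P e.1 e.2)) :
    IsPathSystem ⟨N.edges.erase ex⟩ T φ P := by
  intro e he
  obtain ⟨hc, hrest⟩ := hP e he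
  refine ⟨isChain_iff_forall_mem_pathEdges.mpr fun p hp => ?_, hrest⟩
  exact Finset.mem_erase.mpr
    ⟨ne_of_mem_of_not_mem hp (hex e he), isChain_iff_forall_mem_pathEdges.mp hc p hp⟩

lemma rel_of_mem_edges (hP : IsPathSystem N T φ P) {Q : V → V → Prop}
    (hedge : ∀ b z, (b, z) ∈ N.edges → Q b z)
    (hstep : ∀ b c z, (b, c) ∈ N.edges → c ∉ Set.range φ → Q c z → Q b z)
    {e : W × W} (he : e ∈ T.edges) : Q (φ e.1) (φ e.2) := by
  obtain ⟨hc, hh, hl, hlen, -, hint, -⟩ := hP e he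
  exact rel_head_last_of_isChain hedge hstep hc hlen hh hl hint

end IsPathSystem

lemma iso_of_forall_mem_edges {T : Digraph' W} {T' : Digraph' W'} {leaf : X → W}
    {leaf' : X → W'} (g : W ≃ W') (hcard : T'.edges.card ≤ T.edges.card)
    (hmap : ∀ e ∈ T.edges, (g e.1, g e.2) ∈ T'.edges) (hleaf : ∀ x, g (leaf x) = leaf' x) :
    Iso T leaf T' leaf' := by
  have hinj : Function.Injective (Prod.map g g) := g.injective.prodMap g.injective
  have himage : T.edges.image (Prod.map g g) = T'.edges :=
    Finset.eq_of_subset_of_card_le (Finset.image_subset_iff.mpr hmap)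
      (by rwa [Finset.card_image_of_injective _ hinj])
  refine ⟨g, fun u v => ?_, hleaf⟩
  rw [← himage, Finset.mem_image]
  exact ⟨fun h => ⟨(u, v), h, rfl⟩,
    fun ⟨e, he, hev⟩ => (hinj (a₂ := (u, v)) hev) ▸ he⟩

/-- The displayed tree is binary, so by counting `φ` has the same range as `s`; each of its
edges is then a path of `N` through vertices outside that range, and `Q` over-approximates
the endpoints of such paths. -/
theorem IsPathSystem.iso [Fintype V] [Fintype W'] [Fintype X] {N : Digraph' V}
    {leafN : X → V} {T : Digraph' W} {root : W} {leaf : X → W} {φ : W → V}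
    {P : W → W → List V} (hP : IsPathSystem N T φ P) (hT : IsPhyloTree T root leaf)
    (hφ : Function.Injective φ) (hleaf : ∀ x, φ (leaf x) = leafN x)
    {T' : Digraph' W'} {root' : W'} {leaf' : X → W'} (hT' : IsBinaryPhyloTree T' root' leaf')
    {s : W' → V} (hs : Function.Injective s) (hsleaf : ∀ x, s (leaf' x) = leafN x)
    (hdeg : ∀ v, N.outdeg v ≤ 2) (hbranch : ∀ v, 2 ≤ N.outdeg v → ∃ i, s i = v)
    {Q : V → V → Prop} (hedge : ∀ b z, (b, z) ∈ N.edges → Q b z)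
    (hstep : ∀ b c z, (b, c) ∈ N.edges → (∀ i, s i ≠ c) → Q c z → Q b z)
    (hQ : ∀ i j, Q (s i) (s j) → (i, j) ∈ T'.edges) :
    Iso T leaf T' leaf' := by
  have : Fintype W := Fintype.ofInjective φ hφ
  have hbin := hP.isBinaryPhyloTree hT hdeg
  have hcard : Fintype.card W = Fintype.card W' := by
    have := hbin.card_add_one
    have := hT'.card_add_one
    omega
  have hrange : Set.range φ = Set.range s := by
    refine Set.eq_of_subset_of_card_le ?_ (by
      rw [Set.card_range_of_injective hφ, Set.card_range_of_injective hs, hcard])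
    rintro _ ⟨w, rfl⟩
    by_cases hw : ∃ x, leaf x = w
    · obtain ⟨x, rfl⟩ := hw
      exact ⟨leaf' x, by rw [hsleaf, hleaf]⟩
    · exact hbranch _ ((hT.two_le_outdeg hw).trans (hP.outdeg_le w))
  let g : W ≃ W' := (Equiv.ofInjective φ hφ).trans
    ((Equiv.setCongr hrange).trans (Equiv.ofInjective s hs).symm)
  have hg : ∀ w, s (g w) = φ w := fun w => Equiv.apply_ofInjective_symm hs _
  refine iso_of_forall_mem_edges g ?_ (fun e he => ?_) (fun x => hs ?_)
  · have := hbin.1.card_edges_add_one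
    have := hT'.1.card_edges_add_one
    omega
  · refine hQ _ _ ?_
    rw [hg, hg]
    refine hP.rel_of_mem_edges hedge (fun b c z hbc hc => hstep b c z hbc ?_) he
    rintro i rfl
    exact hc (hrange ▸ ⟨i, rfl⟩)
  · rw [hg, hleaf, hsleaf]

lemma psHard_eq {G : Digraph' V} {leaf : X → V} {χ : X → C} {n : ℕ} (f : V → C)
    (hf : Extends leaf χ f) (hfn : G.ch f = n) (hmin : ∀ f, Extends leaf χ f → n ≤ G.ch f) :
    psHard G leaf χ = n :=
  le_antisymm (Nat.sInf_le ⟨f, hf, hfn⟩)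
    (le_csInf ⟨n, f, hf, hfn⟩ (by rintro _ ⟨f, hf, rfl⟩; exact hmin f hf))

lemma IsPhyloNetwork.eq_root_of_ch_eq_zero {G : Digraph' V} {root : V} {leaf : X → V}
    (hG : IsPhyloNetwork G root leaf) {f : V → C} (hf : G.ch f = 0) (v : V) : f v = f root := by
  have hedge : ∀ e ∈ G.edges, f e.1 = f e.2 := by
    simpa [ch, Finset.filter_eq_empty_iff] using hf
  induction hG.reach v with
  | refl => rfl
  | tail _ hbc ih => exact (hedge _ hbc).symm.trans ih

lemma IsPhyloNetwork.one_le_psHard {G : Digraph' V} {root : V} {leaf : X → V} {χ : X → C}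
    (hG : IsPhyloNetwork G root leaf) {x y : X} (hxy : χ x ≠ χ y) : 1 ≤ psHard G leaf χ := by
  refine le_csInf
    ⟨_, Function.extend leaf χ (fun _ => χ x), hG.leaf_inj.extend_apply _ _, rfl⟩ ?_
  rintro _ ⟨f, hf, rfl⟩
  refine Nat.one_le_iff_ne_zero.mpr fun h0 => hxy ?_
  rw [← hf x, ← hf y, hG.eq_root_of_ch_eq_zero h0 (leaf x),
    hG.eq_root_of_ch_eq_zero h0 (leaf y)]

lemma psSoft_eq {N : Digraph' V} {leafN : X → V} {χ : X → C} {n : ℕ} {T : Digraph' W}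
    {root : W} {leafT : X → W} (hT : IsPhyloTree T root leafT) (hD : Displays N leafN T leafT)
    (hn : psHard T leafT χ = n)
    (hmin : ∀ (W : Type) (T : Digraph' W) (root : W) (leafT : X → W),
      IsPhyloTree T root leafT → Displays N leafN T leafT → n ≤ psHard T leafT χ) :
    psSoft N leafN χ = n :=
  le_antisymm (Nat.sInf_le ⟨W, T, root, leafT, hT, hD, hn⟩)
    (le_csInf ⟨n, W, T, root, leafT, hT, hD, hn⟩
      (by rintro _ ⟨W, T, root, leafT, hT, hD, rfl⟩; exact hmin W T root leafT hT hD))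

def net : Digraph' (Fin 9) :=
  ⟨{(0, 1), (0, 3), (1, 5), (1, 4), (4, 6), (3, 2), (3, 8), (2, 7), (2, 4)}⟩

def netLeaf : Fin 4 → Fin 9 := ![5, 6, 7, 8]

def tree₁ : Digraph' (Fin 7) := ⟨{(4, 5), (4, 6), (5, 0), (5, 1), (6, 2), (6, 3)}⟩

def tree₂ : Digraph' (Fin 7) := ⟨{(4, 0), (4, 5), (5, 6), (5, 3), (6, 1), (6, 2)}⟩

def treeLeaf : Fin 4 → Fin 7 := ![0, 1, 2, 3]

def character : Fin 4 → Bool := ![false, false, true, true]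

lemma isPhyloNetwork_net : IsPhyloNetwork net 0 netLeaf := by
  refine ⟨acyclic_of_rank ![0, 1, 2, 1, 3, 4, 4, 4, 4] (by decide), by decide,
    reflTransGen_of_rank ![0, 1, 2, 1, 3, 4, 4, 4, 4] (by decide) (by decide),
    ?_, ?_, ?_, ?_⟩ <;> simp only [indeg_eq_card_filter, outdeg_eq_card_filter] <;> decide

lemma existsUnique_two_le_indeg_net : ∃! v, 2 ≤ net.indeg v := by
  refine ⟨4, ?_, ?_⟩ <;> simp only [indeg_eq_card_filter] <;> decide

lemma isBinaryPhyloTree_tree₁ : IsBinaryPhyloTree tree₁ 4 treeLeaf := by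
  refine ⟨⟨⟨acyclic_of_rank ![2, 2, 2, 2, 0, 1, 1] (by decide), by decide,
    reflTransGen_of_rank ![2, 2, 2, 2, 0, 1, 1] (by decide) (by decide),
    ?_, ?_, ?_, ?_⟩, ?_⟩, ?_, ?_⟩ <;>
    simp only [indeg_eq_card_filter, outdeg_eq_card_filter] <;> decide

lemma isBinaryPhyloTree_tree₂ : IsBinaryPhyloTree tree₂ 4 treeLeaf := by
  refine ⟨⟨⟨acyclic_of_rank ![3, 3, 3, 3, 0, 1, 2] (by decide), by decide,
    reflTransGen_of_rank ![3, 3, 3, 3, 0, 1, 2] (by decide) (by decide),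
    ?_, ?_, ?_, ?_⟩, ?_⟩, ?_, ?_⟩ <;>
    simp only [indeg_eq_card_filter, outdeg_eq_card_filter] <;> decide

def embed₁ : Fin 7 → Fin 9 := ![5, 6, 7, 8, 0, 1, 3]

def embed₂ : Fin 7 → Fin 9 := ![5, 6, 7, 8, 0, 3, 2]

def netPath (a z : Fin 9) : List (Fin 9) :=
  if (a, z) = (0, 5) then [0, 1, 5]
  else if (a, z) = (1, 6) then [1, 4, 6]
  else if (a, z) = (2, 6) then [2, 4, 6]
  else if (a, z) = (3, 7) then [3, 2, 7]
  else [a, z]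

set_option maxRecDepth 100000 in
set_option synthInstance.maxSize 2000 in
lemma isPathSystem_tree₁ :
    IsPathSystem net tree₁ embed₁ fun u v => netPath (embed₁ u) (embed₁ v) := by
  unfold IsPathSystem; simp only [Set.mem_range]; decide

set_option maxRecDepth 100000 in
set_option synthInstance.maxSize 2000 in
lemma isPathSystem_tree₂ :
    IsPathSystem net tree₂ embed₂ fun u v => netPath (embed₂ u) (embed₂ v) := by
  unfold IsPathSystem; simp only [Set.mem_range]; decide

lemma displays_tree₁ : Displays net netLeaf tree₁ treeLeaf :=
  isPathSystem_tree₁.displays (by decide) (by decide)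

lemma displays_tree₂ : Displays net netLeaf tree₂ treeLeaf :=
  isPathSystem_tree₂.displays (by decide) (by decide)

/-- Leaves `0` and `1` have a common parent in `tree₁` but not in `tree₂`. -/
lemma not_iso_tree₁_tree₂ : ¬ Iso tree₁ treeLeaf tree₂ treeLeaf := by
  rintro ⟨g, hg, hleaf⟩
  have h0 := (hg 5 0).mp (by decide)
  have h1 := (hg 5 1).mp (by decide)
  rw [show g 0 = 0 from hleaf 0] at h0
  rw [show g 1 = 1 from hleaf 1] at h1
  exact (by decide : ∀ y : Fin 7, (y, 0) ∈ tree₂.edges → (y, 1) ∉ tree₂.edges) _ h0 h1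

theorem iso_of_displays_net {W : Type} {T : Digraph' W} {root : W} {leaf : Fin 4 → W}
    (hT : IsPhyloTree T root leaf) (hD : Displays net netLeaf T leaf) :
    Iso T leaf tree₁ treeLeaf ∨ Iso T leaf tree₂ treeLeaf := by
  obtain ⟨φ, hφ, hleaf, P, hP⟩ := hD
  have hP : IsPathSystem net T φ P := hP
  rcases hP.forall_not_mem_or_forall_not_mem hφ hT.2 (u := 2) (u' := 1) (v := 4) (by decide)
    with h | h
  -- `Q` is the switching with its two vertices of in- and out-degree one suppressed.
  · left
    refine (hP.erase h).iso hT hφ hleaf isBinaryPhyloTree_tree₁ (s := embed₁) (by decide)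
      (by decide) (Q := fun b z => (b, z) ∈ net.edges.erase (2, 4) ∪ {(1, 6), (3, 7)})
      ?_ ?_ (fun b z hbz => Finset.mem_union_left _ hbz) (by decide) (by decide)
    · simp only [outdeg_eq_card_filter]; decide
    · simp only [outdeg_eq_card_filter]; decide
  · right
    refine (hP.erase h).iso hT hφ hleaf isBinaryPhyloTree_tree₂ (s := embed₂) (by decide)
      (by decide) (Q := fun b z => (b, z) ∈ net.edges.erase (1, 4) ∪ {(0, 5), (2, 6)})
      ?_ ?_ (fun b z hbz => Finset.mem_union_left _ hbz) (by decide) (by decide)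
    · simp only [outdeg_eq_card_filter]; decide
    · simp only [outdeg_eq_card_filter]; decide

set_option maxRecDepth 10000 in
lemma psHard_tree₁ : psHard tree₁ treeLeaf character = 1 :=
  psHard_eq ![false, false, true, true, false, false, true] (by unfold Extends; decide)
    (by rw [ch_eq_card_filter]; decide) (by simp only [Extends, ch_eq_card_filter]; decide)

set_option maxRecDepth 10000 in
lemma psHard_tree₂ : psHard tree₂ treeLeaf character = 2 :=
  psHard_eq ![false, false, true, true, false, true, true] (by unfold Extends; decide)
    (by rw [ch_eq_card_filter]; decide) (by simp only [Extends, ch_eq_card_filter]; decide)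

lemma psSoft_net : psSoft net netLeaf character = 1 :=
  psSoft_eq isBinaryPhyloTree_tree₁.1 displays_tree₁ psHard_tree₁
    fun _ _ _ _ hT _ => hT.1.one_le_psHard (x := 0) (y := 2) (by decide)

end Digraph'

open Digraph'

/-- a counterexample showing weighted softwired ML is not
    equivalent to softwired MP. -/
theorem stmt15 :
    ∃ (V W₁ W₂ : Type) (N : Digraph' V) (rootN : V) (leafN : Fin 4 → V)
      (T₁ : Digraph' W₁) (rootT₁ : W₁) (leafT₁ : Fin 4 → W₁)
      (T₂ : Digraph' W₂) (rootT₂ : W₂) (leafT₂ : Fin 4 → W₂)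
      (χ : Fin 4 → Bool),
      IsPhyloNetwork N rootN leafN ∧
      (∃! v : V, 2 ≤ N.indeg v) ∧
      IsPhyloTree T₁ rootT₁ leafT₁ ∧ IsPhyloTree T₂ rootT₂ leafT₂ ∧
      Displays N leafN T₁ leafT₁ ∧ Displays N leafN T₂ leafT₂ ∧
      ¬ Iso T₁ leafT₁ T₂ leafT₂ ∧
      (∀ (W : Type) (T : Digraph' W) (rootT : W) (leafT : Fin 4 → W),
        IsPhyloTree T rootT leafT → Displays N leafN T leafT →
        Iso T leafT T₁ leafT₁ ∨ Iso T leafT T₂ leafT₂) ∧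
      psHard T₁ leafT₁ χ = 1 ∧ psHard T₂ leafT₂ χ = 2 ∧ psSoft N leafN χ = 1 ∧
      max ((1 / 4 : ℝ) * 2 ^ (-(psHard T₁ leafT₁ χ : ℤ) - 1))
          ((3 / 4 : ℝ) * 2 ^ (-(psHard T₂ leafT₂ χ : ℤ) - 1)) = 3 / 32 ∧
      (3 / 32 : ℝ) ≠ 2 ^ (-(psSoft N leafN χ : ℤ) - 1) ∧
      (1 / 4 : ℝ) * 2 ^ (-(psHard T₁ leafT₁ χ : ℤ) - 1) <
        (3 / 4 : ℝ) * 2 ^ (-(psHard T₂ leafT₂ χ : ℤ) - 1) := by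
  refine ⟨Fin 9, Fin 7, Fin 7, net, 0, netLeaf, tree₁, 4, treeLeaf, tree₂, 4, treeLeaf,
    character, isPhyloNetwork_net, existsUnique_two_le_indeg_net, isBinaryPhyloTree_tree₁.1,
    isBinaryPhyloTree_tree₂.1, displays_tree₁, displays_tree₂, not_iso_tree₁_tree₂,
    fun _ _ _ _ => iso_of_displays_net, psHard_tree₁, psHard_tree₂, psSoft_net, ?_⟩
  rw [psHard_tree₁, psHard_tree₂, psSoft_net]
  norm_num
end

section
/- If all trees displayed by a rooted phylogenetic network N are assigned the uniform probability P(T|N,χ) = 1/|D(N)| under the N_r-model with no common mechanism, then (assuming the Tuffley–Steel identity max P(χ|T) = r^{−PS(χ,T)−1} for trees) the weighted softwired maximum likelihood satisfies max P_{w-soft}(χ | N) = (1/|D(N)|)·r^{−PS_soft(χ,N)−1}; in particular, for networks with the same number of displayed trees, weighted softwired ML and softwired MP induce the same ranking. -/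
open scoped Classical

/-! Since the hardwired score is invariant under isomorphism, the softwired score is the minimum
of the hardwired scores of the listed representatives of `D(N)`. The weight
`n ↦ (1/m) r^(-n-1)` is strictly decreasing in `n`, so it turns that minimum into the maximum of
the weighted likelihoods and reverses the order of parsimony scores. -/

namespace Digraph'

variable {V W W' X C ι : Type}

theorem ch_comp_equiv {T : Digraph' W} {T' : Digraph' W'} (g : W ≃ W')
    (hg : ∀ u v : W, (u, v) ∈ T.edges ↔ (g u, g v) ∈ T'.edges) (f : W' → C) :
    ch T (f ∘ g) = ch T' f := by
  have hedges : T'.edges = T.edges.map (g.prodCongr g).toEmbedding := by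
    ext ⟨a, b⟩
    simpa using (hg (g.symm a) (g.symm b)).symm
  rw [ch, ch, hedges, Finset.filter_map, Finset.card_map]
  rfl

theorem Iso.psHard_eq {T : Digraph' W} {leafT : X → W} {T' : Digraph' W'} {leafT' : X → W'}
    (h : Iso T leafT T' leafT') (χ : X → C) : psHard T leafT χ = psHard T' leafT' χ := by
  obtain ⟨g, hg, hleaf⟩ := h
  unfold psHard
  congr 1
  ext n
  constructor
  · rintro ⟨f, hf, rfl⟩
    refine ⟨f ∘ g.symm, fun x => ?_, ?_⟩
    · simp [← hleaf x, hf x]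
    · rw [← ch_comp_equiv g hg, Function.comp_assoc, g.symm_comp_self, Function.comp_id]
  · rintro ⟨f, hf, rfl⟩
    exact ⟨f ∘ g, fun x => by simp [hleaf x, hf x], ch_comp_equiv g hg f⟩

theorem psSoft_eq_inf' [Fintype ι] (hι : (Finset.univ : Finset ι).Nonempty)
    (N : Digraph' V) (leafN : X → V) (χ : X → C) (Ts : ι → Digraph' W) (roots : ι → W)
    (leafs : ι → X → W)
    (hTs : ∀ i, IsPhyloTree (Ts i) (roots i) (leafs i) ∧ Displays N leafN (Ts i) (leafs i))
    (hcover : ∀ (W₀ : Type) (T₀ : Digraph' W₀) (rootT₀ : W₀) (leafT₀ : X → W₀),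
      IsPhyloTree T₀ rootT₀ leafT₀ → Displays N leafN T₀ leafT₀ →
      ∃ i, Iso T₀ leafT₀ (Ts i) (leafs i)) :
    psSoft N leafN χ = Finset.univ.inf' hι fun i => psHard (Ts i) (leafs i) χ := by
  have hscores : {n | ∃ (W₀ : Type) (T : Digraph' W₀) (rootT : W₀) (leafT : X → W₀),
      IsPhyloTree T rootT leafT ∧ Displays N leafN T leafT ∧ psHard T leafT χ = n} =
      Set.range fun i => psHard (Ts i) (leafs i) χ := by
    ext n
    constructor
    · rintro ⟨W₀, T₀, root₀, leaf₀, htree, hdisp, rfl⟩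
      obtain ⟨i, hiso⟩ := hcover W₀ T₀ root₀ leaf₀ htree hdisp
      exact ⟨i, (hiso.psHard_eq χ).symm⟩
    · rintro ⟨i, rfl⟩
      exact ⟨W, Ts i, roots i, leafs i, (hTs i).1, (hTs i).2, rfl⟩
  rw [psSoft, hscores, Finset.inf'_eq_csInf_image, Finset.coe_univ, Set.image_univ]

end Digraph'

theorem Finset.sup'_comp_eq_apply_inf' {α β ι : Type*} [LinearOrder α] [SemilatticeSup β]
    {s : Finset ι} (hs : s.Nonempty) {g : α → β} (hg : Antitone g) (f : ι → α) :
    s.sup' hs (fun i => g (f i)) = g (s.inf' hs f) := by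
  obtain ⟨i, hi, hmin⟩ := s.exists_mem_eq_inf' hs f
  exact le_antisymm (Finset.sup'_le _ _ fun j hj => hg (Finset.inf'_le f hj))
    (hmin ▸ Finset.le_sup' (fun j => g (f j)) hi)

theorem strictAnti_mul_zpow_neg_sub_one {c r : ℝ} (hc : 0 < c) (hr : 1 < r) :
    StrictAnti fun n : ℕ => c * r ^ (-(n : ℤ) - 1) :=
  fun _ _ hab => mul_lt_mul_of_pos_left (zpow_lt_zpow_right₀ hr (by omega)) hc

open Digraph'

theorem stmt16_general {V V' X C : Type} (r : ℕ) (hr : 2 ≤ r) {m : ℕ} (hm : 0 < m)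
    (N : Digraph' V) (leafN : X → V)
    (N' : Digraph' V') (leafN' : X → V') (χ : X → C)
    (W : Type) (Ts : Fin m → Digraph' W) (roots : Fin m → W) (leafs : Fin m → X → W)
    (hTs : ∀ i, IsPhyloTree (Ts i) (roots i) (leafs i) ∧ Displays N leafN (Ts i) (leafs i))
    (hcover : ∀ (W₀ : Type) (T₀ : Digraph' W₀) (rootT₀ : W₀) (leafT₀ : X → W₀),
      IsPhyloTree T₀ rootT₀ leafT₀ → Displays N leafN T₀ leafT₀ →
      ∃ i, Iso T₀ leafT₀ (Ts i) (leafs i))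
    (W' : Type) (Ts' : Fin m → Digraph' W') (roots' : Fin m → W') (leafs' : Fin m → X → W')
    (hTs' : ∀ i, IsPhyloTree (Ts' i) (roots' i) (leafs' i) ∧
      Displays N' leafN' (Ts' i) (leafs' i))
    (hcover' : ∀ (W₀ : Type) (T₀ : Digraph' W₀) (rootT₀ : W₀) (leafT₀ : X → W₀),
      IsPhyloTree T₀ rootT₀ leafT₀ → Displays N' leafN' T₀ leafT₀ →
      ∃ i, Iso T₀ leafT₀ (Ts' i) (leafs' i)) :
    (Finset.univ.sup' (Finset.univ_nonempty_iff.mpr ⟨⟨0, hm⟩⟩)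
        (fun i => (1 / m : ℝ) * (r : ℝ) ^ (-(psHard (Ts i) (leafs i) χ : ℤ) - 1)) =
      (1 / m : ℝ) * (r : ℝ) ^ (-(psSoft N leafN χ : ℤ) - 1)) ∧
    (psSoft N leafN χ ≤ psSoft N' leafN' χ ↔
      Finset.univ.sup' (Finset.univ_nonempty_iff.mpr ⟨⟨0, hm⟩⟩)
          (fun i => (1 / m : ℝ) * (r : ℝ) ^ (-(psHard (Ts' i) (leafs' i) χ : ℤ) - 1)) ≤
        Finset.univ.sup' (Finset.univ_nonempty_iff.mpr ⟨⟨0, hm⟩⟩)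
          (fun i => (1 / m : ℝ) * (r : ℝ) ^ (-(psHard (Ts i) (leafs i) χ : ℤ) - 1))) := by
  have hweight : StrictAnti fun n : ℕ => (1 / m : ℝ) * (r : ℝ) ^ (-(n : ℤ) - 1) :=
    strictAnti_mul_zpow_neg_sub_one (by positivity) (by exact_mod_cast hr)
  have hne : (Finset.univ : Finset (Fin m)).Nonempty := Finset.univ_nonempty_iff.mpr ⟨⟨0, hm⟩⟩
  rw [psSoft_eq_inf' hne N leafN χ Ts roots leafs hTs hcover,
    psSoft_eq_inf' hne N' leafN' χ Ts' roots' leafs' hTs' hcover',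
    Finset.sup'_comp_eq_apply_inf' hne hweight.antitone,
    Finset.sup'_comp_eq_apply_inf' hne hweight.antitone]
  exact ⟨rfl, hweight.le_iff_ge.symm⟩

/-- with uniform weights on the displayed trees, the weighted
    softwired ML equals (1/|D(N)|)·r^(−PS_soft−1); in particular, networks with
    equally many displayed trees are ranked identically by weighted softwired ML
    and softwired MP. -/
theorem stmt16 {V V' X C : Type} (r : ℕ) (hr : 2 ≤ r) {m : ℕ} (hm : 0 < m)
    (N : Digraph' V) (rootN : V) (leafN : X → V) (hN : IsPhyloNetwork N rootN leafN)
    (N' : Digraph' V') (rootN' : V') (leafN' : X → V')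
    (hN' : IsPhyloNetwork N' rootN' leafN') (χ : X → C)
    (W : Type) (Ts : Fin m → Digraph' W) (roots : Fin m → W) (leafs : Fin m → X → W)
    (hTs : ∀ i, IsPhyloTree (Ts i) (roots i) (leafs i) ∧ Displays N leafN (Ts i) (leafs i))
    (hcover : ∀ (W₀ : Type) (T₀ : Digraph' W₀) (rootT₀ : W₀) (leafT₀ : X → W₀),
      IsPhyloTree T₀ rootT₀ leafT₀ → Displays N leafN T₀ leafT₀ →
      ∃ i, Iso T₀ leafT₀ (Ts i) (leafs i))
    (hdistinct : ∀ i j, i ≠ j → ¬ Iso (Ts i) (leafs i) (Ts j) (leafs j))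
    (W' : Type) (Ts' : Fin m → Digraph' W') (roots' : Fin m → W') (leafs' : Fin m → X → W')
    (hTs' : ∀ i, IsPhyloTree (Ts' i) (roots' i) (leafs' i) ∧
      Displays N' leafN' (Ts' i) (leafs' i))
    (hcover' : ∀ (W₀ : Type) (T₀ : Digraph' W₀) (rootT₀ : W₀) (leafT₀ : X → W₀),
      IsPhyloTree T₀ rootT₀ leafT₀ → Displays N' leafN' T₀ leafT₀ →
      ∃ i, Iso T₀ leafT₀ (Ts' i) (leafs' i))
    (hdistinct' : ∀ i j, i ≠ j → ¬ Iso (Ts' i) (leafs' i) (Ts' j) (leafs' j)) :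
    (Finset.univ.sup' (Finset.univ_nonempty_iff.mpr ⟨⟨0, hm⟩⟩)
        (fun i => (1 / m : ℝ) * (r : ℝ) ^ (-(psHard (Ts i) (leafs i) χ : ℤ) - 1)) =
      (1 / m : ℝ) * (r : ℝ) ^ (-(psSoft N leafN χ : ℤ) - 1)) ∧
    (psSoft N leafN χ ≤ psSoft N' leafN' χ ↔
      Finset.univ.sup' (Finset.univ_nonempty_iff.mpr ⟨⟨0, hm⟩⟩)
          (fun i => (1 / m : ℝ) * (r : ℝ) ^ (-(psHard (Ts' i) (leafs' i) χ : ℤ) - 1)) ≤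
        Finset.univ.sup' (Finset.univ_nonempty_iff.mpr ⟨⟨0, hm⟩⟩)
          (fun i => (1 / m : ℝ) * (r : ℝ) ^ (-(psHard (Ts i) (leafs i) χ : ℤ) - 1))) :=
  stmt16_general r hr hm N leafN N' leafN' χ W Ts roots leafs hTs hcover W' Ts' roots' leafs' hTs'
    hcover'
end

section
/- Let N be a rooted phylogenetic network on X, χ a character on X, T₂ a switching of N, and χ̄₂ an extension of χ to V(T₂) minimizing ch(χ̄₂,T₂). Then there exists an extension χ̄₃ of χ to V(T₂) with ch(χ̄₃,T₂) = ch(χ̄₂,T₂) such that for every edge (u,v) of T₂ that is a reticulation edge of N, χ̄₃(u) = χ̄₃(v). -/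
open scoped Classical

/-! If a reticulation edge `(u, v)` of the switching changes state, recolour `v` with the state
of `u`. As `v` has no other in-edge and at most one out-edge, the changing number does not grow
and the mismatch moves at most one edge down. Weighting each mismatched reticulation edge by
one plus the number of descendants of its head makes the repeated move terminate; minimality of
the original extension then turns the inequality of changing numbers into an equality. -/

open Digraph' Finset

namespace Digraph'

variable {V X C : Type}

lemma Acyclic.mono {G H : Digraph' V} (hH : H.Acyclic) (hGH : G.edges ⊆ H.edges) : G.Acyclic :=
  fun v hv => hH v (Relation.TransGen.mono (fun _ _ h => hGH h) v v hv)

lemma outdeg_mono {G H : Digraph' V} (hGH : G.edges ⊆ H.edges) (v : V) :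
    G.outdeg v ≤ H.outdeg v :=
  card_le_card (filter_subset_filter _ hGH)

lemma eq_of_mem_edges_of_indeg_eq_one {G : Digraph' V} {u v : V} (hv : G.indeg v = 1)
    (huv : (u, v) ∈ G.edges) : ∀ e ∈ G.edges, e.2 = v → e = (u, v) := fun e he hev =>
  card_le_one.mp hv.le e (mem_filter.mpr ⟨he, hev⟩) _ (mem_filter.mpr ⟨huv, rfl⟩)

lemma IsPhyloNetwork.indeg_leaf {G : Digraph' V} {root : V} {leaf : X → V}
    (hG : IsPhyloNetwork G root leaf) (x : X) : G.indeg (leaf x) = 1 :=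
  ((hG.leaf_iff _).mp ⟨x, rfl⟩).1

lemma IsPhyloNetwork.outdeg_eq_one_of_two_le_indeg {G : Digraph' V} {root : V} {leaf : X → V}
    (hG : IsPhyloNetwork G root leaf) {v : V} (hv : 2 ≤ G.indeg v) : G.outdeg v = 1 := by
  have hroot : v ≠ root := by rintro rfl; rw [hG.root_in] at hv; omega
  have hleaf : ¬ ∃ x, leaf x = v := by rintro ⟨x, rfl⟩; rw [hG.indeg_leaf] at hv; omega
  rcases hG.internal v hroot hleaf with ⟨h, _⟩ | ⟨_, h⟩
  · omega
  · exact h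

noncomputable def changingEdges (E : Finset (V × V)) (f : V → C) : Finset (V × V) :=
  E.filter fun e => f e.1 ≠ f e.2

lemma changingEdges_update_subset {E : Finset (V × V)} {f : V → C} {u v : V}
    (hin : ∀ e ∈ E, e.2 = v → e = (u, v)) :
    changingEdges E (Function.update f v (f u)) ⊆
      (changingEdges E f).erase (u, v) ∪ E.filter (·.1 = v) := by
  intro e he
  obtain ⟨heE, hne⟩ := mem_filter.mp he
  by_cases h1 : e.1 = v
  · exact mem_union_right _ (mem_filter.mpr ⟨heE, h1⟩)
  have h2 : e.2 ≠ v := by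
    rintro h2
    obtain rfl := hin e heE h2
    simp [Function.update, h1] at hne
  refine mem_union_left _ (mem_erase.mpr ⟨fun h => h2 (by rw [h]), mem_filter.mpr ⟨heE, ?_⟩⟩)
  simpa only [Function.update_of_ne h1, Function.update_of_ne h2] using hne

lemma ch_update_le (T : Digraph' V) {f : V → C} {u v : V}
    (huv : (u, v) ∈ changingEdges T.edges f) (hin : ∀ e ∈ T.edges, e.2 = v → e = (u, v))
    (hout : T.outdeg v ≤ 1) : ch T (Function.update f v (f u)) ≤ ch T f := calc
  ch T (Function.update f v (f u))
      ≤ #((changingEdges T.edges f).erase (u, v) ∪ T.edges.filter (·.1 = v)) :=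
    card_le_card (changingEdges_update_subset hin)
  _ ≤ #((changingEdges T.edges f).erase (u, v)) + T.outdeg v := card_union_le _ _
  _ ≤ #(changingEdges T.edges f) := by
    have := card_pos.mpr ⟨_, huv⟩
    rw [card_erase_of_mem huv]
    omega

noncomputable def descendants (T : Digraph' V) (v : V) : Finset V :=
  (T.edges.image Prod.snd).filter (Relation.TransGen (fun a b => (a, b) ∈ T.edges) v)

lemma card_descendants_lt {T : Digraph' V} (hT : T.Acyclic) {v w : V} (hvw : (v, w) ∈ T.edges) :
    #(T.descendants w) < #(T.descendants v) := by
  refine card_lt_card ((ssubset_iff_of_subset ?_).mpr ⟨w, ?_, fun hw => hT w (mem_filter.mp hw).2⟩)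
  · intro x hx
    obtain ⟨hx, hwx⟩ := mem_filter.mp hx
    exact mem_filter.mpr ⟨hx, Relation.TransGen.head hvw hwx⟩
  · exact mem_filter.mpr ⟨mem_image_of_mem _ hvw, Relation.TransGen.single hvw⟩

noncomputable def changeWeight (T : Digraph' V) (E : Finset (V × V)) : ℕ :=
  ∑ e ∈ E, (#(T.descendants e.2) + 1)

lemma changeWeight_update_lt {T : Digraph' V} (hT : T.Acyclic) {R : Finset (V × V)}
    (hR : R ⊆ T.edges) {f : V → C} {u v : V} (huv : (u, v) ∈ changingEdges R f)
    (hin : ∀ e ∈ R, e.2 = v → e = (u, v)) (hout : T.outdeg v ≤ 1) :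
    T.changeWeight (changingEdges R (Function.update f v (f u))) <
      T.changeWeight (changingEdges R f) := by
  set w : V × V → ℕ := fun e => #(T.descendants e.2) + 1
  set B := (changingEdges R f).erase (u, v)
  have hbelow : ∑ e ∈ R.filter (·.1 = v), w e ≤ #(T.descendants v) := by
    have hle : ∀ e ∈ R.filter (·.1 = v), w e ≤ #(T.descendants v) := by
      rintro ⟨x, y⟩ he
      obtain ⟨hmem, hx : x = v⟩ := mem_filter.mp he
      subst hx
      exact card_descendants_lt hT (hR hmem)
    have hcard : #(R.filter (·.1 = v)) ≤ 1 :=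
      (card_le_card (filter_subset_filter _ hR)).trans hout
    calc ∑ e ∈ R.filter (·.1 = v), w e ≤ #(R.filter (·.1 = v)) • #(T.descendants v) :=
          sum_le_card_nsmul _ _ _ hle
      _ ≤ #(T.descendants v) := (Nat.mul_le_mul_right _ hcard).trans (one_mul _).le
  have hw : w (u, v) = #(T.descendants v) + 1 := rfl
  have hunion := sum_union_inter (s₁ := B) (s₂ := R.filter (·.1 = v)) (f := w)
  have hsplit : ∑ e ∈ B, w e + w (u, v) = T.changeWeight (changingEdges R f) :=
    sum_erase_add _ _ huv
  have hsub : T.changeWeight (changingEdges R (Function.update f v (f u))) ≤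
      ∑ e ∈ B ∪ R.filter (·.1 = v), w e :=
    sum_le_sum_of_subset (changingEdges_update_subset hin)
  omega

theorem exists_extends_ch_le_forall_eq (T : Digraph' V) (hT : T.Acyclic) (leaf : X → V)
    (χ : X → C) (ret : V → Prop) (hin : ∀ v, ret v → T.indeg v = 1)
    (hout : ∀ v, ret v → T.outdeg v ≤ 1) (hleaf : ∀ x, ¬ ret (leaf x))
    (f : V → C) (hf : Extends leaf χ f) :
    ∃ g : V → C, Extends leaf χ g ∧ ch T g ≤ ch T f ∧ ∀ e ∈ T.edges, ret e.2 → g e.1 = g e.2 := by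
  set R := T.edges.filter (ret ·.2)
  induction hn : T.changeWeight (changingEdges R f) using Nat.strong_induction_on generalizing f
    with | _ n ih =>
  by_cases hmono : ∀ e ∈ T.edges, ret e.2 → f e.1 = f e.2
  · exact ⟨f, hf, le_rfl, hmono⟩
  push Not at hmono
  obtain ⟨⟨u, v⟩, huv, hv, hne⟩ := hmono
  dsimp only at hv hne
  have hunique := eq_of_mem_edges_of_indeg_eq_one (hin v hv) huv
  have hext : Extends leaf χ (Function.update f v (f u)) := fun x => by
    rw [Function.update_of_ne (fun h => hleaf x (by rwa [h])), hf x]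
  obtain ⟨g, hg, hle, hgmono⟩ := ih _ (hn ▸ changeWeight_update_lt hT (filter_subset _ _)
    (mem_filter.mpr ⟨mem_filter.mpr ⟨huv, hv⟩, hne⟩)
    (fun e he => hunique e (mem_filter.mp he).1) (hout v hv)) _ hext rfl
  exact ⟨g, hg, hle.trans (ch_update_le T (mem_filter.mpr ⟨huv, hne⟩) hunique (hout v hv)),
    hgmono⟩

end Digraph'

/-- a minimal extension on a switching can be modified, keeping the
    changing number, so that every surviving reticulation edge has equal endpoint
    states. -/
theorem stmt17 {V X C : Type} (N : Digraph' V) (rootN : V) (leafN : X → V)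
    (hN : IsPhyloNetwork N rootN leafN) (χ : X → C)
    (T₂ : Digraph' V) (hsw : IsSwitching N T₂)
    (f₂ : V → C) (hext : Extends leafN χ f₂)
    (hmin : ∀ g : V → C, Extends leafN χ g → ch T₂ f₂ ≤ ch T₂ g) :
    ∃ f₃ : V → C, Extends leafN χ f₃ ∧ ch T₂ f₃ = ch T₂ f₂ ∧
      ∀ e ∈ T₂.edges, 2 ≤ N.indeg e.2 → f₃ e.1 = f₃ e.2 := by
  obtain ⟨f₃, hf₃, hle, hmono⟩ := exists_extends_ch_le_forall_eq T₂
    (hN.acyclic.mono hsw.1) leafN χ (fun v => 2 ≤ N.indeg v) hsw.2.2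
    (fun v hv => (outdeg_mono hsw.1 v).trans (hN.outdeg_eq_one_of_two_le_indeg hv).le)
    (fun x hx => by rw [hN.indeg_leaf] at hx; omega) f₂ hext
  exact ⟨f₃, hf₃, le_antisymm hle (hmin f₃ hf₃), hmono⟩
end
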